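/- arXiv:2112.05028 — 4 statements merged into one kernel-verified Lean document; each statement's English description precedes it below -/
import Mathlib

section
/- For every measurable function q : ℝ² × ℝ² → [0,∞], ∫_{π×π} q(x,y) d(x,y) = ∫_{(0,1)²} η₁ · Σ_{z ∈ Z(η₁,η₂)} ( ∫_{π_z} q(Z + z/2, Z − z/2) dZ ) d(η₁,η₂), where Z(η₁,η₂) is the six-element family of vectors {(η₁, η₁η₂), (η₁η₂, η₁), (η₁η₂, η₁η₂ − η₁), (−η₁, −η₁η₂), (−η₁η₂, −η₁), (−η₁η₂, η₁ − η₁η₂)} and π_z = (π − z/2) ∩ (π + z/2). (This is the regularising transformation for identical elements: substituting z = x − y, Z = (x+y)/2, decomposing the difference domain π − π into six triangles, and applying the Duffy transformation on each.) -/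
open MeasureTheory Set
open scoped ENNReal

/-- The open reference triangle `π = {(x₁,x₂) : 0 < x₂ < x₁ < 1} ⊂ ℝ²`. -/
def refTri : Set (ℝ × ℝ) := {p | 0 < p.2 ∧ p.2 < p.1 ∧ p.1 < 1}

/-- `π_z = (π − z/2) ∩ (π + z/2)`. -/
def piZ (z : ℝ × ℝ) : Set (ℝ × ℝ) :=
  {Z | Z + (1/2 : ℝ) • z ∈ refTri ∧ Z - (1/2 : ℝ) • z ∈ refTri}

/-- The inner integral `∫_{π_z} q(Z + z/2, Z − z/2) dZ`. -/
noncomputable def innerInt (q : (ℝ × ℝ) × (ℝ × ℝ) → ℝ≥0∞) (z : ℝ × ℝ) : ℝ≥0∞ :=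
  ∫⁻ Z in piZ z, q (Z + (1/2 : ℝ) • z, Z - (1/2 : ℝ) • z)

namespace RegAux

lemma measurableSet_refTri : MeasurableSet refTri := by
  have : refTri = {p : ℝ × ℝ | 0 < p.2} ∩ ({p : ℝ × ℝ | p.2 < p.1} ∩ {p : ℝ × ℝ | p.1 < 1}) := rfl
  rw [this]
  exact (measurableSet_lt measurable_const measurable_snd).inter
    ((measurableSet_lt measurable_snd measurable_fst).inter
      (measurableSet_lt measurable_fst measurable_const))

lemma measurableSet_piZ (z : ℝ × ℝ) : MeasurableSet (piZ z) := by
  have : piZ z = (fun Z : ℝ × ℝ => Z + (1/2 : ℝ) • z) ⁻¹' refTri ∩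
      (fun Z : ℝ × ℝ => Z - (1/2 : ℝ) • z) ⁻¹' refTri := rfl
  rw [this]
  exact (measurableSet_refTri.preimage (measurable_id.add_const _)).inter
    (measurableSet_refTri.preimage (measurable_id.sub_const _))

/-- The integrand as a function of `(z, Z)`. -/
noncomputable def g (q : (ℝ × ℝ) × (ℝ × ℝ) → ℝ≥0∞) (p : (ℝ × ℝ) × (ℝ × ℝ)) : ℝ≥0∞ :=
  (refTri ×ˢ refTri).indicator q (p.2 + (1/2 : ℝ) • p.1, p.2 - (1/2 : ℝ) • p.1)

lemma measurable_g {q : (ℝ × ℝ) × (ℝ × ℝ) → ℝ≥0∞} (hq : Measurable q) : Measurable (g q) := by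
  apply (hq.indicator (measurableSet_refTri.prod measurableSet_refTri)).comp
  exact (measurable_snd.add (measurable_fst.const_smul ((1:ℝ)/2))).prodMk
    (measurable_snd.sub (measurable_fst.const_smul ((1:ℝ)/2)))

lemma innerInt_eq (q : (ℝ × ℝ) × (ℝ × ℝ) → ℝ≥0∞) (z : ℝ × ℝ) :
    innerInt q z = ∫⁻ Z, g q (z, Z) := by
  unfold innerInt
  rw [← lintegral_indicator (measurableSet_piZ z)]
  apply lintegral_congr
  intro Z
  by_cases hZ : Z ∈ piZ z
  · rw [indicator_of_mem hZ]
    unfold g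
    rw [indicator_of_mem (mem_prod.mpr ⟨hZ.1, hZ.2⟩)]
  · rw [indicator_of_notMem hZ]
    unfold g
    rw [indicator_of_notMem fun hc => hZ ⟨hc.1, hc.2⟩]

lemma measurable_innerInt {q : (ℝ × ℝ) × (ℝ × ℝ) → ℝ≥0∞} (hq : Measurable q) :
    Measurable (innerInt q) := by
  have : innerInt q = fun z => ∫⁻ Z, g q (z, Z) := funext (innerInt_eq q)
  rw [this]
  exact (measurable_g hq).lintegral_prod_right'

/-- Step 1: the change of variables `z = x − y`, `Z = (x+y)/2`. -/
lemma step1 {q : (ℝ × ℝ) × (ℝ × ℝ) → ℝ≥0∞} (hq : Measurable q) :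
    ∫⁻ p in refTri ×ˢ refTri, q p = ∫⁻ z, innerInt q z := by
  have hψ : MeasurePreserving
      (fun p : (ℝ × ℝ) × (ℝ × ℝ) => (p.1 - p.2, p.2 + (1/2 : ℝ) • (p.1 - p.2)))
      volume volume := by
    rw [Measure.volume_eq_prod]
    have h1 : MeasurePreserving (fun p : (ℝ × ℝ) × (ℝ × ℝ) => (p.1 - p.2, p.2))
        (volume.prod volume) (volume.prod volume) := measurePreserving_sub_prod volume volume
    have h2 : MeasurePreserving (fun p : (ℝ × ℝ) × (ℝ × ℝ) => (p.1, p.2 + (1/2 : ℝ) • p.1))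
        (volume.prod volume) (volume.prod volume) := by
      refine (MeasurePreserving.id volume).skew_product
        (g := fun (a c : ℝ × ℝ) => c + (1/2 : ℝ) • a) ?_ ?_
      · exact measurable_snd.add (measurable_fst.const_smul ((1:ℝ)/2))
      · exact Filter.Eventually.of_forall fun a =>
          (measurePreserving_add_right volume ((1/2 : ℝ) • a)).map_eq
    exact h2.comp h1
  have hg : Measurable (g q) := measurable_g hq
  calc ∫⁻ p in refTri ×ˢ refTri, q p
      = ∫⁻ p, (refTri ×ˢ refTri).indicator q p :=
        (lintegral_indicator (measurableSet_refTri.prod measurableSet_refTri) q).symm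
    _ = ∫⁻ p : (ℝ × ℝ) × (ℝ × ℝ), g q (p.1 - p.2, p.2 + (1/2 : ℝ) • (p.1 - p.2)) := by
        apply lintegral_congr
        intro p
        unfold g
        congr 1
        refine Prod.ext ?_ ?_
        · show p.1 = p.2 + (1/2 : ℝ) • (p.1 - p.2) + (1/2 : ℝ) • (p.1 - p.2)
          module
        · show p.2 = p.2 + (1/2 : ℝ) • (p.1 - p.2) - (1/2 : ℝ) • (p.1 - p.2)
          module
    _ = ∫⁻ p, g q p := hψ.lintegral_comp hg
    _ = ∫⁻ z, ∫⁻ Z, g q (z, Z) := by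
        rw [Measure.volume_eq_prod]
        exact lintegral_prod _ hg.aemeasurable
    _ = ∫⁻ z, innerInt q z := by
        apply lintegral_congr
        intro z
        rw [innerInt_eq q z]

/-! ### The six triangles -/

def T1 : Set (ℝ × ℝ) := {z | 0 < z.2 ∧ z.2 < z.1 ∧ z.1 < 1}
def T2 : Set (ℝ × ℝ) := {z | 0 < z.1 ∧ z.1 < z.2 ∧ z.2 < 1}
def T3 : Set (ℝ × ℝ) := {z | 0 < z.1 ∧ z.2 < 0 ∧ z.1 - z.2 < 1}
def T4 : Set (ℝ × ℝ) := {z | z.1 < z.2 ∧ z.2 < 0 ∧ -1 < z.1}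
def T5 : Set (ℝ × ℝ) := {z | z.2 < z.1 ∧ z.1 < 0 ∧ -1 < z.2}
def T6 : Set (ℝ × ℝ) := {z | z.1 < 0 ∧ 0 < z.2 ∧ z.2 - z.1 < 1}

lemma measurableSet_of_three {A B C : Set (ℝ × ℝ)} (hA : MeasurableSet A)
    (hB : MeasurableSet B) (hC : MeasurableSet C) :
    MeasurableSet (A ∩ (B ∩ C)) := hA.inter (hB.inter hC)

lemma mT1 : MeasurableSet T1 :=
  measurableSet_of_three (measurableSet_lt measurable_const measurable_snd)
    (measurableSet_lt measurable_snd measurable_fst)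
    (measurableSet_lt measurable_fst measurable_const)
lemma mT2 : MeasurableSet T2 :=
  measurableSet_of_three (measurableSet_lt measurable_const measurable_fst)
    (measurableSet_lt measurable_fst measurable_snd)
    (measurableSet_lt measurable_snd measurable_const)
lemma mT3 : MeasurableSet T3 :=
  measurableSet_of_three (measurableSet_lt measurable_const measurable_fst)
    (measurableSet_lt measurable_snd measurable_const)
    (measurableSet_lt (measurable_fst.sub measurable_snd) measurable_const)
lemma mT4 : MeasurableSet T4 :=
  measurableSet_of_three (measurableSet_lt measurable_fst measurable_snd)
    (measurableSet_lt measurable_snd measurable_const)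
    (measurableSet_lt measurable_const measurable_fst)
lemma mT5 : MeasurableSet T5 :=
  measurableSet_of_three (measurableSet_lt measurable_snd measurable_fst)
    (measurableSet_lt measurable_fst measurable_const)
    (measurableSet_lt measurable_const measurable_snd)
lemma mT6 : MeasurableSet T6 :=
  measurableSet_of_three (measurableSet_lt measurable_fst measurable_const)
    (measurableSet_lt measurable_const measurable_snd)
    (measurableSet_lt (measurable_snd.sub measurable_fst) measurable_const)

/-- `innerInt q z = 0` outside the hexagon. -/
lemma innerInt_zero (q : (ℝ × ℝ) × (ℝ × ℝ) → ℝ≥0∞) {z : ℝ × ℝ}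
    (hz : ¬(-1 < z.1 ∧ z.1 < 1 ∧ -1 < z.2 ∧ z.2 < 1 ∧ -1 < z.1 - z.2 ∧ z.1 - z.2 < 1)) :
    innerInt q z = 0 := by
  have hempty : piZ z = ∅ := by
    ext Z
    simp only [piZ, refTri, mem_setOf_eq, mem_empty_iff_false, iff_false]
    intro hmem
    apply hz
    simp only [Prod.fst_add, Prod.snd_add, Prod.fst_sub, Prod.snd_sub, Prod.smul_fst,
      Prod.smul_snd, smul_eq_mul] at hmem
    obtain ⟨⟨a1, a2, a3⟩, b1, b2, b3⟩ := hmem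
    refine ⟨by linarith, by linarith, by linarith, by linarith, by linarith, by linarith⟩
  unfold innerInt
  rw [hempty, Measure.restrict_empty, lintegral_zero_measure]

/-- The hexagon minus three lines is covered by the six triangles. -/
lemma mem_cover {z : ℝ × ℝ}
    (h : -1 < z.1 ∧ z.1 < 1 ∧ -1 < z.2 ∧ z.2 < 1 ∧ -1 < z.1 - z.2 ∧ z.1 - z.2 < 1)
    (h1 : z.1 ≠ 0) (h2 : z.2 ≠ 0) (h3 : z.1 ≠ z.2) :
    z ∈ T1 ∪ (T2 ∪ (T3 ∪ (T4 ∪ (T5 ∪ T6)))) := by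
  obtain ⟨k1, k2, k3, k4, k5, k6⟩ := h
  simp only [mem_union]
  rcases h1.lt_or_gt with hz1 | hz1
  · rcases h2.lt_or_gt with hz2 | hz2
    · rcases h3.lt_or_gt with hz3 | hz3
      · exact Or.inr (Or.inr (Or.inr (Or.inl ⟨hz3, hz2, k1⟩)))
      · exact Or.inr (Or.inr (Or.inr (Or.inr (Or.inl ⟨hz3, hz1, k3⟩))))
    · exact Or.inr (Or.inr (Or.inr (Or.inr (Or.inr ⟨hz1, hz2, by linarith⟩))))
  · rcases h2.lt_or_gt with hz2 | hz2
    · exact Or.inr (Or.inr (Or.inl ⟨hz1, hz2, k6⟩))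
    · rcases h3.lt_or_gt with hz3 | hz3
      · exact Or.inr (Or.inl ⟨hz1, hz3, k4⟩)
      · exact Or.inl ⟨hz2, hz3, k2⟩

/-- The three exceptional lines are null. -/
lemma null3 : volume ({z : ℝ × ℝ | z.1 = 0} ∪ {z : ℝ × ℝ | z.2 = 0}
    ∪ {z : ℝ × ℝ | z.1 = z.2}) = 0 := by
  refine measure_union_null (measure_union_null ?_ ?_) ?_
  · have : {z : ℝ × ℝ | z.1 = 0} = ({0} : Set ℝ) ×ˢ (univ : Set ℝ) := by
      ext z; simp only [mem_setOf_eq, mem_prod, mem_singleton_iff, mem_univ, and_true]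
    rw [this, Measure.volume_eq_prod, Measure.prod_prod]
    simp
  · have : {z : ℝ × ℝ | z.2 = 0} = (univ : Set ℝ) ×ˢ ({0} : Set ℝ) := by
      ext z; simp only [mem_setOf_eq, mem_prod, mem_singleton_iff, mem_univ, true_and]
    rw [this, Measure.volume_eq_prod, Measure.prod_prod]
    simp
  · have hs : {z : ℝ × ℝ | z.1 = z.2} =
        (LinearMap.ker ((LinearMap.fst ℝ ℝ ℝ) - (LinearMap.snd ℝ ℝ ℝ)) : Set (ℝ × ℝ)) := by
      ext z
      simp [LinearMap.mem_ker, sub_eq_zero]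
    rw [hs]
    refine Measure.addHaar_submodule _ _ fun htop => ?_
    have h10 := Submodule.eq_top_iff'.mp htop ((1 : ℝ), (0 : ℝ))
    simp [LinearMap.mem_ker] at h10

/-- The candidate derivative of the (linearly transformed) Duffy map. -/
noncomputable def fd (a b c d : ℝ) (η : ℝ × ℝ) : (ℝ × ℝ) →L[ℝ] (ℝ × ℝ) :=
  ((a + b * η.2) • ContinuousLinearMap.fst ℝ ℝ ℝ + (b * η.1) • ContinuousLinearMap.snd ℝ ℝ ℝ).prod
  ((c + d * η.2) • ContinuousLinearMap.fst ℝ ℝ ℝ + (d * η.1) • ContinuousLinearMap.snd ℝ ℝ ℝ)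

lemma det_helper (p q r s : ℝ) :
    LinearMap.det (((p • ContinuousLinearMap.fst ℝ ℝ ℝ + q • ContinuousLinearMap.snd ℝ ℝ ℝ).prod
      (r • ContinuousLinearMap.fst ℝ ℝ ℝ + s • ContinuousLinearMap.snd ℝ ℝ ℝ)).toLinearMap)
    = p * s - q * r := by
  rw [← LinearMap.det_toMatrix (Module.Basis.finTwoProd ℝ)]
  have : (LinearMap.toMatrix (Module.Basis.finTwoProd ℝ) (Module.Basis.finTwoProd ℝ))
      (((p • ContinuousLinearMap.fst ℝ ℝ ℝ + q • ContinuousLinearMap.snd ℝ ℝ ℝ).prod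
      (r • ContinuousLinearMap.fst ℝ ℝ ℝ + s • ContinuousLinearMap.snd ℝ ℝ ℝ)).toLinearMap)
      = !![p, q; r, s] := by
    ext i j
    fin_cases i <;> fin_cases j <;>
      simp [LinearMap.toMatrix_apply, Module.Basis.finTwoProd]
  rw [this, Matrix.det_fin_two_of]

lemma hasFDerivAt_duffy (a b c d : ℝ) (η : ℝ × ℝ) :
    HasFDerivAt (fun η : ℝ × ℝ => (a * η.1 + b * (η.1 * η.2), c * η.1 + d * (η.1 * η.2)))
      (fd a b c d η) η := by
  have hfst : HasFDerivAt (Prod.fst : ℝ × ℝ → ℝ) (ContinuousLinearMap.fst ℝ ℝ ℝ) η :=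
    hasFDerivAt_fst
  have hsnd : HasFDerivAt (Prod.snd : ℝ × ℝ → ℝ) (ContinuousLinearMap.snd ℝ ℝ ℝ) η :=
    hasFDerivAt_snd
  have h1 : HasFDerivAt (fun η : ℝ × ℝ => a * η.1 + b * (η.1 * η.2))
      ((a + b * η.2) • ContinuousLinearMap.fst ℝ ℝ ℝ
        + (b * η.1) • ContinuousLinearMap.snd ℝ ℝ ℝ) η := by
    have := (hfst.const_mul a).add ((hfst.mul hsnd).const_mul b)
    refine this.congr_fderiv ?_
    module
  have h2 : HasFDerivAt (fun η : ℝ × ℝ => c * η.1 + d * (η.1 * η.2))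
      ((c + d * η.2) • ContinuousLinearMap.fst ℝ ℝ ℝ
        + (d * η.1) • ContinuousLinearMap.snd ℝ ℝ ℝ) η := by
    have := (hfst.const_mul c).add ((hfst.mul hsnd).const_mul d)
    refine this.congr_fderiv ?_
    module
  exact h1.prodMk h2

/-- The generic Duffy-type change of variables on the unit square. -/
lemma duffy (G : ℝ × ℝ → ℝ≥0∞) (a b c d : ℝ) (hdet : a * d - b * c = 1 ∨ a * d - b * c = -1) :
    ∫⁻ z in (fun η : ℝ × ℝ => (a * η.1 + b * (η.1 * η.2), c * η.1 + d * (η.1 * η.2))) ''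
        (Ioo (0:ℝ) 1 ×ˢ Ioo (0:ℝ) 1), G z
      = ∫⁻ η in Ioo (0:ℝ) 1 ×ˢ Ioo (0:ℝ) 1,
          ENNReal.ofReal η.1 * G (a * η.1 + b * (η.1 * η.2), c * η.1 + d * (η.1 * η.2)) := by
  have hS : MeasurableSet (Ioo (0:ℝ) 1 ×ˢ Ioo (0:ℝ) 1) :=
    measurableSet_Ioo.prod measurableSet_Ioo
  have hd0 : a * d - b * c ≠ 0 := by rcases hdet with h | h <;> rw [h] <;> norm_num
  have hderiv : ∀ η ∈ Ioo (0:ℝ) 1 ×ˢ Ioo (0:ℝ) 1,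
      HasFDerivWithinAt (fun η : ℝ × ℝ => (a * η.1 + b * (η.1 * η.2), c * η.1 + d * (η.1 * η.2)))
        (fd a b c d η) (Ioo (0:ℝ) 1 ×ˢ Ioo (0:ℝ) 1) η :=
    fun η _ => (hasFDerivAt_duffy a b c d η).hasFDerivWithinAt
  have hinj : InjOn (fun η : ℝ × ℝ => (a * η.1 + b * (η.1 * η.2), c * η.1 + d * (η.1 * η.2)))
      (Ioo (0:ℝ) 1 ×ˢ Ioo (0:ℝ) 1) := by
    rintro ⟨x, y⟩ ⟨hx, hy⟩ ⟨x', y'⟩ ⟨hx', hy'⟩ heq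
    obtain ⟨e1, e2⟩ := Prod.ext_iff.mp heq
    simp only at e1 e2
    have hxx : x = x' := by
      rcases hdet with h | h
      · linear_combination d * e1 - b * e2 - (x - x') * h
      · linear_combination -(d * e1) + b * e2 + (x - x') * h
    subst hxx
    have key : (a * d - b * c) * (x * (y - y')) = 0 := by
      linear_combination a * e2 - c * e1
    have hx0 : x ≠ 0 := ne_of_gt hx.1
    have : x * (y - y') = 0 := by
      rcases mul_eq_zero.mp key with h | h
      · exact absurd h hd0
      · exact h
    have : y - y' = 0 := by
      rcases mul_eq_zero.mp this with h | h
      · exact absurd h hx0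
      · exact h
    have : y = y' := by linarith
    exact Prod.ext rfl this
  rw [lintegral_image_eq_lintegral_abs_det_fderiv_mul volume hS hderiv hinj G]
  apply setLIntegral_congr_fun hS
  intro η hη
  beta_reduce
  congr 1
  have hdval : (fd a b c d η).det = η.1 * (a * d - b * c) := by
    have : (fd a b c d η).det = (a + b * η.2) * (d * η.1) - (b * η.1) * (c + d * η.2) := by
      rw [ContinuousLinearMap.det]
      exact det_helper _ _ _ _
    rw [this]; ring
  rw [hdval]
  have hη1 : 0 < η.1 := hη.1.1
  rcases hdet with h | h <;> rw [h]
  · rw [mul_one, abs_of_pos hη1]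
  · rw [show η.1 * (-1 : ℝ) = -η.1 by ring, abs_neg, abs_of_pos hη1]


/-! ### Characterisation of the six triangles as Duffy images -/

lemma img1 : (fun η : ℝ × ℝ => ((1:ℝ) * η.1 + 0 * (η.1 * η.2), (0:ℝ) * η.1 + 1 * (η.1 * η.2))) ''
    (Ioo (0:ℝ) 1 ×ˢ Ioo (0:ℝ) 1) = T1 := by
  ext ⟨z1, z2⟩
  simp only [T1, mem_image, mem_prod, mem_Ioo, mem_setOf_eq, Prod.exists, Prod.mk.injEq]
  constructor
  · rintro ⟨x, y, ⟨⟨hx0, hx1⟩, hy0, hy1⟩, e1, e2⟩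
    refine ⟨by nlinarith, by nlinarith, by nlinarith⟩
  · rintro ⟨h1, h2, h3⟩
    have hz1 : (0:ℝ) < z1 := by linarith
    refine ⟨z1, z2 / z1, ⟨⟨hz1, h3⟩, div_pos h1 hz1, (div_lt_one hz1).mpr h2⟩, by ring, ?_⟩
    field_simp; ring

lemma img2 : (fun η : ℝ × ℝ => ((0:ℝ) * η.1 + 1 * (η.1 * η.2), (1:ℝ) * η.1 + 0 * (η.1 * η.2))) ''
    (Ioo (0:ℝ) 1 ×ˢ Ioo (0:ℝ) 1) = T2 := by
  ext ⟨z1, z2⟩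
  simp only [T2, mem_image, mem_prod, mem_Ioo, mem_setOf_eq, Prod.exists, Prod.mk.injEq]
  constructor
  · rintro ⟨x, y, ⟨⟨hx0, hx1⟩, hy0, hy1⟩, e1, e2⟩
    refine ⟨by nlinarith, by nlinarith, by nlinarith⟩
  · rintro ⟨h1, h2, h3⟩
    have hz2 : (0:ℝ) < z2 := by linarith
    refine ⟨z2, z1 / z2, ⟨⟨hz2, h3⟩, div_pos h1 hz2, (div_lt_one hz2).mpr h2⟩, ?_, by ring⟩
    field_simp; ring

lemma img3 : (fun η : ℝ × ℝ => ((0:ℝ) * η.1 + 1 * (η.1 * η.2), (-1:ℝ) * η.1 + 1 * (η.1 * η.2))) ''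
    (Ioo (0:ℝ) 1 ×ˢ Ioo (0:ℝ) 1) = T3 := by
  ext ⟨z1, z2⟩
  simp only [T3, mem_image, mem_prod, mem_Ioo, mem_setOf_eq, Prod.exists, Prod.mk.injEq]
  constructor
  · rintro ⟨x, y, ⟨⟨hx0, hx1⟩, hy0, hy1⟩, e1, e2⟩
    refine ⟨by nlinarith, by nlinarith, by nlinarith⟩
  · rintro ⟨h1, h2, h3⟩
    have hx : (0:ℝ) < z1 - z2 := by linarith
    refine ⟨z1 - z2, z1 / (z1 - z2), ⟨⟨hx, h3⟩, div_pos h1 hx,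
      (div_lt_one hx).mpr (by linarith)⟩, ?_, ?_⟩
    · field_simp; ring
    · field_simp; ring

lemma img4 : (fun η : ℝ × ℝ => ((-1:ℝ) * η.1 + 0 * (η.1 * η.2), (0:ℝ) * η.1 + -1 * (η.1 * η.2))) ''
    (Ioo (0:ℝ) 1 ×ˢ Ioo (0:ℝ) 1) = T4 := by
  ext ⟨z1, z2⟩
  simp only [T4, mem_image, mem_prod, mem_Ioo, mem_setOf_eq, Prod.exists, Prod.mk.injEq]
  constructor
  · rintro ⟨x, y, ⟨⟨hx0, hx1⟩, hy0, hy1⟩, e1, e2⟩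
    refine ⟨by nlinarith, by nlinarith, by nlinarith⟩
  · rintro ⟨h1, h2, h3⟩
    have hx : (0:ℝ) < -z1 := by linarith
    refine ⟨-z1, (-z2) / (-z1), ⟨⟨hx, by linarith⟩, div_pos (by linarith) hx,
      (div_lt_one hx).mpr (by linarith)⟩, by ring, ?_⟩
    have hne : z1 ≠ 0 := ne_of_lt (by linarith)
    field_simp; ring

lemma img5 : (fun η : ℝ × ℝ => ((0:ℝ) * η.1 + -1 * (η.1 * η.2), (-1:ℝ) * η.1 + 0 * (η.1 * η.2))) ''
    (Ioo (0:ℝ) 1 ×ˢ Ioo (0:ℝ) 1) = T5 := by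
  ext ⟨z1, z2⟩
  simp only [T5, mem_image, mem_prod, mem_Ioo, mem_setOf_eq, Prod.exists, Prod.mk.injEq]
  constructor
  · rintro ⟨x, y, ⟨⟨hx0, hx1⟩, hy0, hy1⟩, e1, e2⟩
    refine ⟨by nlinarith, by nlinarith, by nlinarith⟩
  · rintro ⟨h1, h2, h3⟩
    have hx : (0:ℝ) < -z2 := by linarith
    refine ⟨-z2, (-z1) / (-z2), ⟨⟨hx, by linarith⟩, div_pos (by linarith) hx,
      (div_lt_one hx).mpr (by linarith)⟩, ?_, by ring⟩
    have hne : z2 ≠ 0 := ne_of_lt (by linarith)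
    field_simp; ring

lemma img6 : (fun η : ℝ × ℝ => ((0:ℝ) * η.1 + -1 * (η.1 * η.2), (1:ℝ) * η.1 + -1 * (η.1 * η.2))) ''
    (Ioo (0:ℝ) 1 ×ˢ Ioo (0:ℝ) 1) = T6 := by
  ext ⟨z1, z2⟩
  simp only [T6, mem_image, mem_prod, mem_Ioo, mem_setOf_eq, Prod.exists, Prod.mk.injEq]
  constructor
  · rintro ⟨x, y, ⟨⟨hx0, hx1⟩, hy0, hy1⟩, e1, e2⟩
    refine ⟨by nlinarith, by nlinarith, by nlinarith⟩
  · rintro ⟨h1, h2, h3⟩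
    have hx : (0:ℝ) < z2 - z1 := by linarith
    refine ⟨z2 - z1, (-z1) / (z2 - z1), ⟨⟨hx, h3⟩, div_pos (by linarith) hx,
      (div_lt_one hx).mpr (by linarith)⟩, ?_, ?_⟩
    · field_simp; ring
    · field_simp; ring

end RegAux

open RegAux in
/-- The regularising transformation for identical elements: substituting
`z = x − y`, `Z = (x+y)/2`, decomposing the difference domain `π − π` into six
triangles and applying the Duffy transformation on each. -/
theorem regularisation_identical_elements
    (q : (ℝ × ℝ) × (ℝ × ℝ) → ℝ≥0∞) (hq : Measurable q) :
    ∫⁻ p in refTri ×ˢ refTri, q p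
      = ∫⁻ η in (Ioo (0:ℝ) 1) ×ˢ (Ioo (0:ℝ) 1),
          ENNReal.ofReal η.1 *
            (innerInt q (η.1, η.1 * η.2)
              + innerInt q (η.1 * η.2, η.1)
              + innerInt q (η.1 * η.2, η.1 * η.2 - η.1)
              + innerInt q (-η.1, -(η.1 * η.2))
              + innerInt q (-(η.1 * η.2), -η.1)
              + innerInt q (-(η.1 * η.2), η.1 - η.1 * η.2)) := by
  classical
  rw [step1 hq]
  have hF : Measurable (innerInt q) := measurable_innerInt hq
  have hUmeas : MeasurableSet (T1 ∪ (T2 ∪ (T3 ∪ (T4 ∪ (T5 ∪ T6))))) :=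
    mT1.union (mT2.union (mT3.union (mT4.union (mT5.union mT6))))
  -- pairwise disjointness
  have d12 : Disjoint T1 T2 := by
    rw [Set.disjoint_left]; rintro z ⟨a1, a2, a3⟩ ⟨b1, b2, b3⟩; linarith
  have d13 : Disjoint T1 T3 := by
    rw [Set.disjoint_left]; rintro z ⟨a1, a2, a3⟩ ⟨b1, b2, b3⟩; linarith
  have d14 : Disjoint T1 T4 := by
    rw [Set.disjoint_left]; rintro z ⟨a1, a2, a3⟩ ⟨b1, b2, b3⟩; linarith
  have d15 : Disjoint T1 T5 := by
    rw [Set.disjoint_left]; rintro z ⟨a1, a2, a3⟩ ⟨b1, b2, b3⟩; linarith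
  have d16 : Disjoint T1 T6 := by
    rw [Set.disjoint_left]; rintro z ⟨a1, a2, a3⟩ ⟨b1, b2, b3⟩; linarith
  have d23 : Disjoint T2 T3 := by
    rw [Set.disjoint_left]; rintro z ⟨a1, a2, a3⟩ ⟨b1, b2, b3⟩; linarith
  have d24 : Disjoint T2 T4 := by
    rw [Set.disjoint_left]; rintro z ⟨a1, a2, a3⟩ ⟨b1, b2, b3⟩; linarith
  have d25 : Disjoint T2 T5 := by
    rw [Set.disjoint_left]; rintro z ⟨a1, a2, a3⟩ ⟨b1, b2, b3⟩; linarith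
  have d26 : Disjoint T2 T6 := by
    rw [Set.disjoint_left]; rintro z ⟨a1, a2, a3⟩ ⟨b1, b2, b3⟩; linarith
  have d34 : Disjoint T3 T4 := by
    rw [Set.disjoint_left]; rintro z ⟨a1, a2, a3⟩ ⟨b1, b2, b3⟩; linarith
  have d35 : Disjoint T3 T5 := by
    rw [Set.disjoint_left]; rintro z ⟨a1, a2, a3⟩ ⟨b1, b2, b3⟩; linarith
  have d36 : Disjoint T3 T6 := by
    rw [Set.disjoint_left]; rintro z ⟨a1, a2, a3⟩ ⟨b1, b2, b3⟩; linarith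
  have d45 : Disjoint T4 T5 := by
    rw [Set.disjoint_left]; rintro z ⟨a1, a2, a3⟩ ⟨b1, b2, b3⟩; linarith
  have d46 : Disjoint T4 T6 := by
    rw [Set.disjoint_left]; rintro z ⟨a1, a2, a3⟩ ⟨b1, b2, b3⟩; linarith
  have d56 : Disjoint T5 T6 := by
    rw [Set.disjoint_left]; rintro z ⟨a1, a2, a3⟩ ⟨b1, b2, b3⟩; linarith
  -- restrict the integral to the union of the six triangles
  have hrestrict : ∫⁻ z, innerInt q z
      = ∫⁻ z in T1 ∪ (T2 ∪ (T3 ∪ (T4 ∪ (T5 ∪ T6)))), innerInt q z := by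
    rw [← lintegral_indicator hUmeas]
    apply lintegral_congr_ae
    rw [Filter.EventuallyEq, ae_iff]
    refine measure_mono_null (fun z hz => ?_) null3
    simp only [mem_setOf_eq] at hz
    by_contra hN
    simp only [mem_union, mem_setOf_eq, not_or] at hN
    obtain ⟨⟨hN1, hN2⟩, hN3⟩ := hN
    apply hz
    by_cases hzU : z ∈ T1 ∪ (T2 ∪ (T3 ∪ (T4 ∪ (T5 ∪ T6))))
    · rw [indicator_of_mem hzU]
    · rw [indicator_of_notMem hzU]
      exact innerInt_zero q fun hhex => hzU (mem_cover hhex hN1 hN2 hN3)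
  rw [hrestrict]
  rw [lintegral_union (mT2.union (mT3.union (mT4.union (mT5.union mT6))))
      (Set.disjoint_union_right.mpr ⟨d12, Set.disjoint_union_right.mpr ⟨d13,
        Set.disjoint_union_right.mpr ⟨d14, Set.disjoint_union_right.mpr ⟨d15, d16⟩⟩⟩⟩),
    lintegral_union (mT3.union (mT4.union (mT5.union mT6)))
      (Set.disjoint_union_right.mpr ⟨d23, Set.disjoint_union_right.mpr ⟨d24,
        Set.disjoint_union_right.mpr ⟨d25, d26⟩⟩⟩),
    lintegral_union (mT4.union (mT5.union mT6))
      (Set.disjoint_union_right.mpr ⟨d34, Set.disjoint_union_right.mpr ⟨d35, d36⟩⟩),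
    lintegral_union (mT5.union mT6) (Set.disjoint_union_right.mpr ⟨d45, d46⟩),
    lintegral_union mT6 d56]
  -- the six Duffy substitutions
  have e1 : ∫⁻ z in T1, innerInt q z
      = ∫⁻ η in Ioo (0:ℝ) 1 ×ˢ Ioo (0:ℝ) 1,
          ENNReal.ofReal η.1 * innerInt q (η.1, η.1 * η.2) := by
    rw [← img1, duffy (innerInt q) 1 0 0 1 (by norm_num)]
    refine lintegral_congr fun η => ?_
    congr 1 <;> first
      | (simp only [Prod.mk.injEq]; exact ⟨by ring, by ring⟩)
      | ring
  have e2 : ∫⁻ z in T2, innerInt q z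
      = ∫⁻ η in Ioo (0:ℝ) 1 ×ˢ Ioo (0:ℝ) 1,
          ENNReal.ofReal η.1 * innerInt q (η.1 * η.2, η.1) := by
    rw [← img2, duffy (innerInt q) 0 1 1 0 (by norm_num)]
    refine lintegral_congr fun η => ?_
    congr 1 <;> first
      | (simp only [Prod.mk.injEq]; exact ⟨by ring, by ring⟩)
      | ring
  have e3 : ∫⁻ z in T3, innerInt q z
      = ∫⁻ η in Ioo (0:ℝ) 1 ×ˢ Ioo (0:ℝ) 1,
          ENNReal.ofReal η.1 * innerInt q (η.1 * η.2, η.1 * η.2 - η.1) := by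
    rw [← img3, duffy (innerInt q) 0 1 (-1) 1 (by norm_num)]
    refine lintegral_congr fun η => ?_
    congr 1 <;> first
      | (simp only [Prod.mk.injEq]; exact ⟨by ring, by ring⟩)
      | ring
  have e4 : ∫⁻ z in T4, innerInt q z
      = ∫⁻ η in Ioo (0:ℝ) 1 ×ˢ Ioo (0:ℝ) 1,
          ENNReal.ofReal η.1 * innerInt q (-η.1, -(η.1 * η.2)) := by
    rw [← img4, duffy (innerInt q) (-1) 0 0 (-1) (by norm_num)]
    refine lintegral_congr fun η => ?_
    congr 1 <;> first
      | (simp only [Prod.mk.injEq]; exact ⟨by ring, by ring⟩)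
      | ring
  have e5 : ∫⁻ z in T5, innerInt q z
      = ∫⁻ η in Ioo (0:ℝ) 1 ×ˢ Ioo (0:ℝ) 1,
          ENNReal.ofReal η.1 * innerInt q (-(η.1 * η.2), -η.1) := by
    rw [← img5, duffy (innerInt q) 0 (-1) (-1) 0 (by norm_num)]
    refine lintegral_congr fun η => ?_
    congr 1 <;> first
      | (simp only [Prod.mk.injEq]; exact ⟨by ring, by ring⟩)
      | ring
  have e6 : ∫⁻ z in T6, innerInt q z
      = ∫⁻ η in Ioo (0:ℝ) 1 ×ˢ Ioo (0:ℝ) 1,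
          ENNReal.ofReal η.1 * innerInt q (-(η.1 * η.2), η.1 - η.1 * η.2) := by
    rw [← img6, duffy (innerInt q) 0 (-1) 1 (-1) (by norm_num)]
    refine lintegral_congr fun η => ?_
    congr 1 <;> first
      | (simp only [Prod.mk.injEq]; exact ⟨by ring, by ring⟩)
      | ring
  rw [e1, e2, e3, e4, e5, e6]
  -- measurability of the six integrands
  have hA1 : Measurable fun η : ℝ × ℝ => ENNReal.ofReal η.1 * innerInt q (η.1, η.1 * η.2) :=
    (ENNReal.measurable_ofReal.comp measurable_fst).mul
      (hF.comp (measurable_fst.prodMk (measurable_fst.mul measurable_snd)))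
  have hA2 : Measurable fun η : ℝ × ℝ => ENNReal.ofReal η.1 * innerInt q (η.1 * η.2, η.1) :=
    (ENNReal.measurable_ofReal.comp measurable_fst).mul
      (hF.comp ((measurable_fst.mul measurable_snd).prodMk measurable_fst))
  have hA3 : Measurable fun η : ℝ × ℝ =>
      ENNReal.ofReal η.1 * innerInt q (η.1 * η.2, η.1 * η.2 - η.1) :=
    (ENNReal.measurable_ofReal.comp measurable_fst).mul
      (hF.comp ((measurable_fst.mul measurable_snd).prodMk
        ((measurable_fst.mul measurable_snd).sub measurable_fst)))
  have hA4 : Measurable fun η : ℝ × ℝ => ENNReal.ofReal η.1 * innerInt q (-η.1, -(η.1 * η.2)) :=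
    (ENNReal.measurable_ofReal.comp measurable_fst).mul
      (hF.comp (measurable_fst.neg.prodMk (measurable_fst.mul measurable_snd).neg))
  have hA5 : Measurable fun η : ℝ × ℝ => ENNReal.ofReal η.1 * innerInt q (-(η.1 * η.2), -η.1) :=
    (ENNReal.measurable_ofReal.comp measurable_fst).mul
      (hF.comp ((measurable_fst.mul measurable_snd).neg.prodMk measurable_fst.neg))
  have hA6 : Measurable fun η : ℝ × ℝ =>
      ENNReal.ofReal η.1 * innerInt q (-(η.1 * η.2), η.1 - η.1 * η.2) :=
    (ENNReal.measurable_ofReal.comp measurable_fst).mul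
      (hF.comp ((measurable_fst.mul measurable_snd).neg.prodMk
        (measurable_fst.sub (measurable_fst.mul measurable_snd))))
  rw [← lintegral_add_left hA5, ← lintegral_add_left hA4, ← lintegral_add_left hA3,
    ← lintegral_add_left hA2, ← lintegral_add_left hA1]
  refine lintegral_congr fun η => ?_
  ring
end

section
/- Let η₁, η₂ ∈ (0,1) and let z be any of the six vectors ±(η₁, η₁η₂), ±(η₁η₂, η₁), ±(η₁η₂, η₁η₂ − η₁) in ℝ². Then the 2-dimensional Lebesgue measure of the set π_z = (π − z/2) ∩ (π + z/2) equals (1 − η₁)²/2. -/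
open MeasureTheory Set
open scoped ENNReal

lemma tri_vol (c : ℝ) (hc : 0 < c) :
    volume {p : ℝ × ℝ | 0 < p.2 ∧ p.2 < p.1 ∧ p.1 < c} = ENNReal.ofReal (c ^ 2 / 2) := by
  have hset : {p : ℝ × ℝ | 0 < p.2 ∧ p.2 < p.1 ∧ p.1 < c}
      = regionBetween (fun _ => (0:ℝ)) (fun x => x) (Ioo 0 c) := by
    ext p
    simp only [regionBetween, mem_setOf_eq, mem_Ioo]
    constructor
    · rintro ⟨h1, h2, h3⟩; exact ⟨⟨lt_trans h1 h2, h3⟩, h1, h2⟩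
    · rintro ⟨⟨_, h3⟩, h1, h2⟩; exact ⟨h1, h2, h3⟩
  have hi1 : IntegrableOn (fun _ : ℝ => (0:ℝ)) (Ioo 0 c) volume :=
    integrableOn_const measure_Ioo_lt_top.ne
  have hi2 : IntegrableOn (fun x : ℝ => x) (Ioo 0 c) volume :=
    (intervalIntegrable_iff_integrableOn_Ioo_of_le hc.le).1 intervalIntegral.intervalIntegrable_id
  rw [hset, Measure.volume_eq_prod, volume_regionBetween_eq_integral hi1 hi2
    measurableSet_Ioo (fun x hx => hx.1.le)]
  simp only [Pi.sub_apply, sub_zero]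
  congr 1
  rw [← integral_Ioc_eq_integral_Ioo, ← intervalIntegral.integral_of_le hc.le]
  simp

lemma piZ_neg (z : ℝ × ℝ) : piZ (-z) = piZ z := by
  ext Z
  simp only [piZ, smul_neg, sub_neg_eq_add, mem_setOf_eq, ← sub_eq_add_neg, and_comm]

lemma piZ_vol_of_eq (z w : ℝ × ℝ) (c : ℝ) (hc : 0 < c)
    (h : piZ z = (fun Z => Z + w) ⁻¹' {p : ℝ × ℝ | 0 < p.2 ∧ p.2 < p.1 ∧ p.1 < c}) :
    volume (piZ z) = ENNReal.ofReal (c ^ 2 / 2) := by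
  rw [h, measure_preimage_add_right, tri_vol c hc]

/-- For `η₁, η₂ ∈ (0,1)` and `z` any of the six vectors `±(η₁, η₁η₂)`,
`±(η₁η₂, η₁)`, `±(η₁η₂, η₁η₂ − η₁)`, the two-dimensional Lebesgue measure of
`π_z = (π − z/2) ∩ (π + z/2)` equals `(1 − η₁)²/2`. -/
theorem measure_piZ (η₁ η₂ : ℝ) (h₁ : η₁ ∈ Ioo (0:ℝ) 1) (h₂ : η₂ ∈ Ioo (0:ℝ) 1)
    (z : ℝ × ℝ)
    (hz : z = (η₁, η₁ * η₂) ∨ z = (η₁ * η₂, η₁) ∨ z = (η₁ * η₂, η₁ * η₂ - η₁) ∨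
          z = (-η₁, -(η₁ * η₂)) ∨ z = (-(η₁ * η₂), -η₁) ∨
          z = (-(η₁ * η₂), η₁ - η₁ * η₂)) :
    volume (piZ z) = ENNReal.ofReal ((1 - η₁) ^ 2 / 2) := by
  obtain ⟨ha, hb⟩ := h₁
  obtain ⟨hc, hd⟩ := h₂
  have hc1 : (0:ℝ) < 1 - η₁ := by linarith
  have key1 : volume (piZ (η₁, η₁ * η₂)) = ENNReal.ofReal ((1 - η₁) ^ 2 / 2) := by
    apply piZ_vol_of_eq _ (-(η₁/2), -(η₁*η₂/2)) _ hc1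
    ext Z
    simp only [piZ, refTri, mem_setOf_eq, mem_preimage, Prod.fst_add, Prod.snd_add,
      Prod.fst_sub, Prod.snd_sub, Prod.smul_fst, Prod.smul_snd, smul_eq_mul]
    constructor
    · rintro ⟨⟨a1, a2, a3⟩, b1, b2, b3⟩
      refine ⟨?_, ?_, ?_⟩ <;> nlinarith
    · rintro ⟨c1, c2, c3⟩
      refine ⟨⟨?_, ?_, ?_⟩, ?_, ?_, ?_⟩ <;> nlinarith
  have key2 : volume (piZ (η₁ * η₂, η₁)) = ENNReal.ofReal ((1 - η₁) ^ 2 / 2) := by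
    apply piZ_vol_of_eq _ (η₁*η₂/2 - η₁, -(η₁/2)) _ hc1
    ext Z
    simp only [piZ, refTri, mem_setOf_eq, mem_preimage, Prod.fst_add, Prod.snd_add,
      Prod.fst_sub, Prod.snd_sub, Prod.smul_fst, Prod.smul_snd, smul_eq_mul]
    constructor
    · rintro ⟨⟨a1, a2, a3⟩, b1, b2, b3⟩
      refine ⟨?_, ?_, ?_⟩ <;> nlinarith
    · rintro ⟨c1, c2, c3⟩
      refine ⟨⟨?_, ?_, ?_⟩, ?_, ?_, ?_⟩ <;> nlinarith
  have key3 : volume (piZ (η₁ * η₂, η₁ * η₂ - η₁)) = ENNReal.ofReal ((1 - η₁) ^ 2 / 2) := by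
    apply piZ_vol_of_eq _ (η₁*η₂/2 - η₁, (η₁*η₂ - η₁)/2) _ hc1
    ext Z
    simp only [piZ, refTri, mem_setOf_eq, mem_preimage, Prod.fst_add, Prod.snd_add,
      Prod.fst_sub, Prod.snd_sub, Prod.smul_fst, Prod.smul_snd, smul_eq_mul]
    constructor
    · rintro ⟨⟨a1, a2, a3⟩, b1, b2, b3⟩
      refine ⟨?_, ?_, ?_⟩ <;> nlinarith
    · rintro ⟨c1, c2, c3⟩
      refine ⟨⟨?_, ?_, ?_⟩, ?_, ?_, ?_⟩ <;> nlinarith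
  rcases hz with h | h | h | h | h | h
  · rw [h]; exact key1
  · rw [h]; exact key2
  · rw [h]; exact key3
  · rw [h, show ((-η₁, -(η₁ * η₂)) : ℝ × ℝ) = -(η₁, η₁ * η₂) from rfl, piZ_neg]; exact key1
  · rw [h, show ((-(η₁ * η₂), -η₁) : ℝ × ℝ) = -(η₁ * η₂, η₁) from rfl, piZ_neg]; exact key2
  · rw [h, show ((-(η₁ * η₂), η₁ - η₁ * η₂) : ℝ × ℝ) = -(η₁ * η₂, η₁ * η₂ - η₁) by
      simp [Prod.ext_iff], piZ_neg]
    exact key3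
end

section
/- For every measurable function q : ℝ² × ℝ² → [0,∞], ∫_{π×π} q(x,y) d(x,y) = ∫_{(0,1)⁴} η₁³ η₂² ( q(A₁(η)) + η₃ · (q(A₂(η)) + q(A₃(η)) + q(A₄(η)) + q(A₅(η))) ) dη, where a point A = (A^{(1)}, A^{(2)}, A^{(3)}, A^{(4)}) ∈ ℝ⁴ is read as the pair x = (A^{(1)}, A^{(2)}), y = (A^{(3)}, A^{(4)}), and where A₁(η) = η₁·(1, η₂η₄, 1−η₂η₃, η₂(1−η₃)), A₂(η) = η₁·(1, η₂, 1−η₂η₃η₄, η₂η₃(1−η₄)), A₃(η) = η₁·(1−η₂η₃, η₂(1−η₃), 1, η₂η₃η₄), A₄(η) = η₁·(1−η₂η₃η₄, η₂η₃(1−η₄), 1, η₂), A₅(η) = η₁·(1−η₂η₃η₄, η₂(1−η₃η₄), 1, η₂η₃). (This is the Sauter–Schwab regularising transformation for a pair of elements sharing a common edge.) -/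
open MeasureTheory Set
open scoped ENNReal

section Aux
open ContinuousLinearMap
noncomputable section
abbrev E4 := (ℝ × ℝ) × (ℝ × ℝ)
def P1 : E4 →L[ℝ] ℝ := (fst ℝ ℝ ℝ).comp (fst ℝ (ℝ×ℝ) (ℝ×ℝ))
def P2 : E4 →L[ℝ] ℝ := (snd ℝ ℝ ℝ).comp (fst ℝ (ℝ×ℝ) (ℝ×ℝ))
def P3 : E4 →L[ℝ] ℝ := (fst ℝ ℝ ℝ).comp (snd ℝ (ℝ×ℝ) (ℝ×ℝ))
def P4 : E4 →L[ℝ] ℝ := (snd ℝ ℝ ℝ).comp (snd ℝ (ℝ×ℝ) (ℝ×ℝ))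
@[simp] lemma P1_apply (p : E4) : P1 p = p.1.1 := rfl
@[simp] lemma P2_apply (p : E4) : P2 p = p.1.2 := rfl
@[simp] lemma P3_apply (p : E4) : P3 p = p.2.1 := rfl
@[simp] lemma P4_apply (p : E4) : P4 p = p.2.2 := rfl
def Lrow (r : Fin 4 → ℝ) : E4 →L[ℝ] ℝ := r 0 • P1 + r 1 • P2 + r 2 • P3 + r 3 • P4
@[simp] lemma Lrow_apply (r : Fin 4 → ℝ) (p : E4) :
    Lrow r p = r 0 * p.1.1 + r 1 * p.1.2 + r 2 * p.2.1 + r 3 * p.2.2 := by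
  simp [Lrow]
def Mmat (m : Fin 4 → Fin 4 → ℝ) : E4 →L[ℝ] E4 :=
  ((Lrow (m 0)).prod (Lrow (m 1))).prod ((Lrow (m 2)).prod (Lrow (m 3)))
@[simp] lemma Mmat_apply (m : Fin 4 → Fin 4 → ℝ) (p : E4) :
    Mmat m p = ((Lrow (m 0) p, Lrow (m 1) p), (Lrow (m 2) p, Lrow (m 3) p)) := rfl
def eE : (Fin 4 → ℝ) ≃ₗ[ℝ] E4 where
  toFun v := ((v 0, v 1), (v 2, v 3))
  invFun p := ![p.1.1, p.1.2, p.2.1, p.2.2]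
  map_add' v w := rfl
  map_smul' c v := rfl
  left_inv v := by funext i; fin_cases i <;> rfl
  right_inv p := rfl
lemma eE_apply (v : Fin 4 → ℝ) : eE v = ((v 0, v 1), (v 2, v 3)) := rfl
lemma eE_symm_apply (p : E4) : eE.symm p = ![p.1.1, p.1.2, p.2.1, p.2.2] := rfl
lemma Mmat_det (m : Fin 4 → Fin 4 → ℝ) :
    (Mmat m).det = Matrix.det (Matrix.of m) := by
  have h : ((Mmat m : E4 →ₗ[ℝ] E4)) =
      (eE : (Fin 4 → ℝ) →ₗ[ℝ] E4) ∘ₗ (Matrix.toLin' (Matrix.of m)) ∘ₗ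
        (eE.symm : E4 →ₗ[ℝ] (Fin 4 → ℝ)) := by
    apply LinearMap.ext; intro p
    simp [Matrix.toLin'_apply, Matrix.mulVec, dotProduct, Fin.sum_univ_four, eE_apply, eE_symm_apply,
      Prod.ext_iff]
    refine ⟨⟨?_, ?_⟩, ?_, ?_⟩ <;> simp [Matrix.vecHead, Matrix.vecTail] <;> ring
  show LinearMap.det ((Mmat m : E4 →ₗ[ℝ] E4)) = _
  rw [h, LinearMap.det_conj, LinearMap.det_toLin']


@[simp] lemma castSucc_two4 : (Fin.castSucc 2 : Fin 4) = 2 := rfl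

/-- f₁ -/
def f1 (p : E4) : E4 :=
  ((p.1.1 * 1, p.1.1 * (p.1.2 * p.2.2)),
   (p.1.1 * (1 - p.1.2 * p.2.1), p.1.1 * (p.1.2 * (1 - p.2.1))))
def m1 (p : E4) : Fin 4 → Fin 4 → ℝ :=
  ![![1, 0, 0, 0],
    ![p.1.2 * p.2.2, p.1.1 * p.2.2, 0, p.1.1 * p.1.2],
    ![1 - p.1.2 * p.2.1, -(p.1.1 * p.2.1), -(p.1.1 * p.1.2), 0],
    ![p.1.2 * (1 - p.2.1), p.1.1 * (1 - p.2.1), -(p.1.1 * p.1.2), 0]]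

lemma hP1 (p : E4) : HasFDerivAt (fun q : E4 => q.1.1) P1 p :=
  hasFDerivAt_fst.comp p hasFDerivAt_fst
lemma hP2 (p : E4) : HasFDerivAt (fun q : E4 => q.1.2) P2 p :=
  hasFDerivAt_snd.comp p hasFDerivAt_fst
lemma hP3 (p : E4) : HasFDerivAt (fun q : E4 => q.2.1) P3 p :=
  hasFDerivAt_fst.comp p hasFDerivAt_snd
lemma hP4 (p : E4) : HasFDerivAt (fun q : E4 => q.2.2) P4 p :=
  hasFDerivAt_snd.comp p hasFDerivAt_snd

lemma f1_deriv (p : E4) : HasFDerivAt f1 (Mmat (m1 p)) p := by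
  have h1 := (hP1 p).mul (hasFDerivAt_const (1:ℝ) p)
  have h2 := (hP1 p).mul ((hP2 p).mul (hP4 p))
  have h3 := (hP1 p).mul ((hasFDerivAt_const (1:ℝ) p).sub ((hP2 p).mul (hP3 p)))
  have h4 := (hP1 p).mul ((hP2 p).mul ((hasFDerivAt_const (1:ℝ) p).sub (hP3 p)))
  refine (HasFDerivAt.prodMk (HasFDerivAt.prodMk h1 h2) (HasFDerivAt.prodMk h3 h4)).congr_fderiv ?_
  apply ContinuousLinearMap.ext; intro v
  simp only [Mmat_apply, Lrow_apply, m1, Prod.ext_iff, ContinuousLinearMap.prod_apply,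
    ContinuousLinearMap.add_apply, ContinuousLinearMap.smul_apply, ContinuousLinearMap.sub_apply,
    ContinuousLinearMap.zero_apply, P1_apply, P2_apply, P3_apply, P4_apply,
    Matrix.cons_val_zero, Matrix.cons_val_one, Matrix.head_cons, Matrix.cons_val_two,
    Matrix.cons_val_three, Matrix.tail_cons, smul_eq_mul, Pi.mul_apply, Pi.sub_apply]
  refine ⟨⟨by ring, by ring⟩, by ring, by ring⟩

lemma f1_det (p : E4) : (Mmat (m1 p)).det = p.1.1^3 * p.1.2^2 := by
  rw [Mmat_det]
  simp [Matrix.det_succ_row_zero, Fin.sum_univ_succ, Matrix.det_fin_three, Fin.succAbove, m1]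
  ring

def f2 (p : E4) : E4 :=
  ((p.1.1 * 1, p.1.1 * p.1.2),
   (p.1.1 * (1 - p.1.2 * p.2.1 * p.2.2), p.1.1 * (p.1.2 * p.2.1 * (1 - p.2.2))))
def m2 (p : E4) : Fin 4 → Fin 4 → ℝ :=
  ![![1, 0, 0, 0],
    ![p.1.2, p.1.1, 0, 0],
    ![1 - p.1.2 * p.2.1 * p.2.2, -(p.1.1 * (p.2.1 * p.2.2)), -(p.1.1 * (p.1.2 * p.2.2)), -(p.1.1 * (p.1.2 * p.2.1))],
    ![p.1.2 * p.2.1 * (1 - p.2.2), p.1.1 * p.2.1 * (1 - p.2.2), p.1.1 * p.1.2 * (1 - p.2.2), -(p.1.1 * (p.1.2 * p.2.1))]]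
lemma f2_deriv (p : E4) : HasFDerivAt f2 (Mmat (m2 p)) p := by
  have h1 := (hP1 p).mul (hasFDerivAt_const (1:ℝ) p)
  have h2 := (hP1 p).mul (hP2 p)
  have h3 := (hP1 p).mul ((hasFDerivAt_const (1:ℝ) p).sub (((hP2 p).mul (hP3 p)).mul (hP4 p)))
  have h4 := (hP1 p).mul (((hP2 p).mul (hP3 p)).mul ((hasFDerivAt_const (1:ℝ) p).sub (hP4 p)))
  refine (HasFDerivAt.prodMk (HasFDerivAt.prodMk h1 h2) (HasFDerivAt.prodMk h3 h4)).congr_fderiv ?_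
  apply ContinuousLinearMap.ext; intro v
  simp only [Mmat_apply, Lrow_apply, m2, Prod.ext_iff, ContinuousLinearMap.prod_apply,
    ContinuousLinearMap.add_apply, ContinuousLinearMap.smul_apply, ContinuousLinearMap.sub_apply,
    ContinuousLinearMap.zero_apply, P1_apply, P2_apply, P3_apply, P4_apply,
    Matrix.cons_val_zero, Matrix.cons_val_one, Matrix.head_cons, Matrix.cons_val_two,
    Matrix.cons_val_three, Matrix.tail_cons, smul_eq_mul, Pi.mul_apply, Pi.sub_apply]
  refine ⟨⟨by ring, by ring⟩, by ring, by ring⟩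
lemma f2_det (p : E4) : (Mmat (m2 p)).det = p.1.1^3 * p.1.2^2 * p.2.1 := by
  rw [Mmat_det]
  simp [Matrix.det_succ_row_zero, Fin.sum_univ_succ, Matrix.det_fin_three, Fin.succAbove, m2]
  ring


def f3 (p : E4) : E4 :=
  ((p.1.1 * (1 - p.1.2 * p.2.1), p.1.1 * (p.1.2 * (1 - p.2.1))),
   (p.1.1 * 1, p.1.1 * (p.1.2 * p.2.1 * p.2.2)))
def m3 (p : E4) : Fin 4 → Fin 4 → ℝ :=
  ![![1 - p.1.2 * p.2.1, -(p.1.1 * p.2.1), -(p.1.1 * p.1.2), 0],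
    ![p.1.2 * (1 - p.2.1), p.1.1 * (1 - p.2.1), -(p.1.1 * p.1.2), 0],
    ![1, 0, 0, 0],
    ![p.1.2 * p.2.1 * p.2.2, p.1.1 * p.2.1 * p.2.2, p.1.1 * p.1.2 * p.2.2, p.1.1 * (p.1.2 * p.2.1)]]
lemma f3_deriv (p : E4) : HasFDerivAt f3 (Mmat (m3 p)) p := by
  have h1 := (hP1 p).mul ((hasFDerivAt_const (1:ℝ) p).sub ((hP2 p).mul (hP3 p)))
  have h2 := (hP1 p).mul ((hP2 p).mul ((hasFDerivAt_const (1:ℝ) p).sub (hP3 p)))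
  have h3 := (hP1 p).mul (hasFDerivAt_const (1:ℝ) p)
  have h4 := (hP1 p).mul (((hP2 p).mul (hP3 p)).mul (hP4 p))
  refine (HasFDerivAt.prodMk (HasFDerivAt.prodMk h1 h2) (HasFDerivAt.prodMk h3 h4)).congr_fderiv ?_
  apply ContinuousLinearMap.ext; intro v
  simp only [Mmat_apply, Lrow_apply, m3, Prod.ext_iff, ContinuousLinearMap.prod_apply,
    ContinuousLinearMap.add_apply, ContinuousLinearMap.smul_apply, ContinuousLinearMap.sub_apply,
    ContinuousLinearMap.zero_apply, P1_apply, P2_apply, P3_apply, P4_apply,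
    Matrix.cons_val_zero, Matrix.cons_val_one, Matrix.head_cons, Matrix.cons_val_two,
    Matrix.cons_val_three, Matrix.tail_cons, smul_eq_mul, Pi.mul_apply, Pi.sub_apply]
  refine ⟨⟨by ring, by ring⟩, by ring, by ring⟩
lemma f3_det (p : E4) : (Mmat (m3 p)).det = p.1.1^3 * p.1.2^2 * p.2.1 := by
  rw [Mmat_det]
  simp [Matrix.det_succ_row_zero, Fin.sum_univ_succ, Matrix.det_fin_three, Fin.succAbove, m3]
  ring


def f4 (p : E4) : E4 :=
  ((p.1.1 * (1 - p.1.2 * p.2.1 * p.2.2), p.1.1 * (p.1.2 * p.2.1 * (1 - p.2.2))),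
   (p.1.1 * 1, p.1.1 * p.1.2))
def m4 (p : E4) : Fin 4 → Fin 4 → ℝ :=
  ![![1 - p.1.2 * p.2.1 * p.2.2, -(p.1.1 * (p.2.1 * p.2.2)), -(p.1.1 * (p.1.2 * p.2.2)), -(p.1.1 * (p.1.2 * p.2.1))],
    ![p.1.2 * p.2.1 * (1 - p.2.2), p.1.1 * p.2.1 * (1 - p.2.2), p.1.1 * p.1.2 * (1 - p.2.2), -(p.1.1 * (p.1.2 * p.2.1))],
    ![1, 0, 0, 0],
    ![p.1.2, p.1.1, 0, 0]]
lemma f4_deriv (p : E4) : HasFDerivAt f4 (Mmat (m4 p)) p := by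
  have h1 := (hP1 p).mul ((hasFDerivAt_const (1:ℝ) p).sub (((hP2 p).mul (hP3 p)).mul (hP4 p)))
  have h2 := (hP1 p).mul (((hP2 p).mul (hP3 p)).mul ((hasFDerivAt_const (1:ℝ) p).sub (hP4 p)))
  have h3 := (hP1 p).mul (hasFDerivAt_const (1:ℝ) p)
  have h4 := (hP1 p).mul (hP2 p)
  refine (HasFDerivAt.prodMk (HasFDerivAt.prodMk h1 h2) (HasFDerivAt.prodMk h3 h4)).congr_fderiv ?_
  apply ContinuousLinearMap.ext; intro v
  simp only [Mmat_apply, Lrow_apply, m4, Prod.ext_iff, ContinuousLinearMap.prod_apply,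
    ContinuousLinearMap.add_apply, ContinuousLinearMap.smul_apply, ContinuousLinearMap.sub_apply,
    ContinuousLinearMap.zero_apply, P1_apply, P2_apply, P3_apply, P4_apply,
    Matrix.cons_val_zero, Matrix.cons_val_one, Matrix.head_cons, Matrix.cons_val_two,
    Matrix.cons_val_three, Matrix.tail_cons, smul_eq_mul, Pi.mul_apply, Pi.sub_apply]
  refine ⟨⟨by ring, by ring⟩, by ring, by ring⟩
lemma f4_det (p : E4) : (Mmat (m4 p)).det = p.1.1^3 * p.1.2^2 * p.2.1 := by
  rw [Mmat_det]
  simp [Matrix.det_succ_row_zero, Fin.sum_univ_succ, Matrix.det_fin_three, Fin.succAbove, m4]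
  ring


def f5 (p : E4) : E4 :=
  ((p.1.1 * (1 - p.1.2 * p.2.1 * p.2.2), p.1.1 * (p.1.2 * (1 - p.2.1 * p.2.2))),
   (p.1.1 * 1, p.1.1 * (p.1.2 * p.2.1)))
def m5 (p : E4) : Fin 4 → Fin 4 → ℝ :=
  ![![1 - p.1.2 * p.2.1 * p.2.2, -(p.1.1 * (p.2.1 * p.2.2)), -(p.1.1 * (p.1.2 * p.2.2)), -(p.1.1 * (p.1.2 * p.2.1))],
    ![p.1.2 * (1 - p.2.1 * p.2.2), p.1.1 * (1 - p.2.1 * p.2.2), -(p.1.1 * (p.1.2 * p.2.2)), -(p.1.1 * (p.1.2 * p.2.1))],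
    ![1, 0, 0, 0],
    ![p.1.2 * p.2.1, p.1.1 * p.2.1, p.1.1 * p.1.2, 0]]
lemma f5_deriv (p : E4) : HasFDerivAt f5 (Mmat (m5 p)) p := by
  have h1 := (hP1 p).mul ((hasFDerivAt_const (1:ℝ) p).sub (((hP2 p).mul (hP3 p)).mul (hP4 p)))
  have h2 := (hP1 p).mul ((hP2 p).mul ((hasFDerivAt_const (1:ℝ) p).sub ((hP3 p).mul (hP4 p))))
  have h3 := (hP1 p).mul (hasFDerivAt_const (1:ℝ) p)
  have h4 := (hP1 p).mul ((hP2 p).mul (hP3 p))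
  refine (HasFDerivAt.prodMk (HasFDerivAt.prodMk h1 h2) (HasFDerivAt.prodMk h3 h4)).congr_fderiv ?_
  apply ContinuousLinearMap.ext; intro v
  simp only [Mmat_apply, Lrow_apply, m5, Prod.ext_iff, ContinuousLinearMap.prod_apply,
    ContinuousLinearMap.add_apply, ContinuousLinearMap.smul_apply, ContinuousLinearMap.sub_apply,
    ContinuousLinearMap.zero_apply, P1_apply, P2_apply, P3_apply, P4_apply,
    Matrix.cons_val_zero, Matrix.cons_val_one, Matrix.head_cons, Matrix.cons_val_two,
    Matrix.cons_val_three, Matrix.tail_cons, smul_eq_mul, Pi.mul_apply, Pi.sub_apply]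
  refine ⟨⟨by ring, by ring⟩, by ring, by ring⟩
lemma f5_det (p : E4) : (Mmat (m5 p)).det = -(p.1.1^3 * p.1.2^2 * p.2.1) := by
  rw [Mmat_det]
  simp [Matrix.det_succ_row_zero, Fin.sum_univ_succ, Matrix.det_fin_three, Fin.succAbove, m5]
  ring

def cube : Set E4 := (Ioo (0:ℝ) 1 ×ˢ Ioo (0:ℝ) 1) ×ˢ (Ioo (0:ℝ) 1 ×ˢ Ioo (0:ℝ) 1)
def PP : Set E4 := refTri ×ˢ refTri
def D1 : Set E4 := {p | p ∈ PP ∧ p.2.1 < p.1.1 ∧ p.1.2 - p.2.2 < p.1.1 - p.2.1}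

lemma mem_cube' {a b c d : ℝ} : ((a,b),(c,d)) ∈ cube ↔
    (0 < a ∧ a < 1) ∧ (0 < b ∧ b < 1) ∧ (0 < c ∧ c < 1) ∧ (0 < d ∧ d < 1) := by
  simp [cube, mem_prod, mem_Ioo, and_assoc]

lemma mem_PP' {u v w z : ℝ} : ((u,v),(w,z)) ∈ PP ↔
    (0 < v ∧ v < u ∧ u < 1) ∧ (0 < z ∧ z < w ∧ w < 1) := by
  simp [PP, refTri, mem_prod]

lemma mem_D1' {u v w z : ℝ} : ((u,v),(w,z)) ∈ D1 ↔
    ((0 < v ∧ v < u ∧ u < 1) ∧ (0 < z ∧ z < w ∧ w < 1)) ∧ w < u ∧ v - z < u - w := by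
  rw [D1, mem_setOf_eq, mem_PP']

lemma f1_inj : InjOn f1 cube := by
  rintro ⟨⟨a,b⟩,⟨c,d⟩⟩ hp ⟨⟨a',b'⟩,⟨c',d'⟩⟩ hq h
  rw [mem_cube'] at hp hq
  obtain ⟨⟨ha0,ha1⟩,⟨hb0,hb1⟩,⟨hc0,hc1⟩,⟨hd0,hd1⟩⟩ := hp
  obtain ⟨⟨ha0',ha1'⟩,⟨hb0',hb1'⟩,⟨hc0',hc1'⟩,⟨hd0',hd1'⟩⟩ := hq
  simp only [f1, Prod.mk.injEq] at h ⊢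
  obtain ⟨⟨e1,e2⟩,e3,e4⟩ := h
  have ha : a = a' := by simpa using e1
  subst ha
  have h3 : 1 - b*c = 1 - b'*c' := mul_left_cancel₀ (ne_of_gt ha0) e3
  have hbc : b*c = b'*c' := by linarith
  have h4 : b*(1-c) = b'*(1-c') := mul_left_cancel₀ (ne_of_gt ha0) e4
  have hb : b = b' := by linear_combination h4 + hbc
  subst hb
  have hc : c = c' := mul_left_cancel₀ (ne_of_gt hb0) hbc
  subst hc
  have hd : d = d' := by
    have h2 : b*d = b*d' := mul_left_cancel₀ (ne_of_gt ha0) e2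
    exact mul_left_cancel₀ (ne_of_gt hb0) h2
  simp [hd]

lemma f1_image : f1 '' cube = D1 := by
  ext ⟨⟨u,v⟩,⟨w,z⟩⟩
  constructor
  · rintro ⟨⟨⟨a,b⟩,⟨c,d⟩⟩, hp, hfp⟩
    rw [mem_cube'] at hp
    obtain ⟨⟨ha0,ha1⟩,⟨hb0,hb1⟩,⟨hc0,hc1⟩,⟨hd0,hd1⟩⟩ := hp
    simp only [f1, Prod.mk.injEq] at hfp
    obtain ⟨⟨rfl,rfl⟩,rfl,rfl⟩ := hfp
    rw [mem_D1']
    refine ⟨⟨⟨?_,?_,?_⟩,?_,?_,?_⟩,?_,?_⟩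
    · nlinarith [mul_pos ha0 (mul_pos hb0 hd0)]
    · nlinarith [mul_pos ha0 (sub_pos.2 hd1), mul_pos (mul_pos ha0 hd0) (sub_pos.2 hb1)]
    · linarith
    · nlinarith [mul_pos (mul_pos ha0 hb0) (sub_pos.2 hc1)]
    · nlinarith [mul_pos ha0 (sub_pos.2 hb1)]
    · nlinarith [mul_pos (mul_pos ha0 hb0) hc0]
    · nlinarith [mul_pos (mul_pos ha0 hb0) hc0]
    · nlinarith [mul_pos (mul_pos ha0 hb0) (sub_pos.2 hd1)]
  · rintro h
    rw [mem_D1'] at h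
    obtain ⟨⟨⟨hv0, hvu, hu1⟩, ⟨hz0, hzw, hw1⟩⟩, h1, h2⟩ := h
    have hu0 : 0 < u := by linarith
    have hs : 0 < u - w + z := by linarith
    refine ⟨((u, (u - w + z)/u), ((u - w)/(u - w + z), v/(u - w + z))), ?_, ?_⟩
    · rw [mem_cube']
      refine ⟨⟨hu0, hu1⟩, ⟨div_pos hs hu0, (div_lt_one hu0).2 (by linarith)⟩,
        ⟨div_pos (by linarith) hs, (div_lt_one hs).2 (by linarith)⟩,
        ⟨div_pos (by linarith) hs, (div_lt_one hs).2 (by linarith)⟩⟩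
    · simp only [f1, Prod.mk.injEq]
      refine ⟨⟨by ring, ?_⟩, ?_, ?_⟩ <;> field_simp <;> ring

def D2 : Set E4 := {p | p ∈ PP ∧ p.2.1 < p.1.1 ∧ p.1.1 - p.2.1 < p.1.2 - p.2.2}
lemma mem_D2' {u v w z : ℝ} : ((u,v),(w,z)) ∈ D2 ↔
    ((0 < v ∧ v < u ∧ u < 1) ∧ (0 < z ∧ z < w ∧ w < 1)) ∧ w < u ∧ u - w < v - z := by
  rw [D2, mem_setOf_eq, mem_PP']

lemma f2_inj : InjOn f2 cube := by
  rintro ⟨⟨a,b⟩,⟨c,d⟩⟩ hp ⟨⟨a',b'⟩,⟨c',d'⟩⟩ hq h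
  rw [mem_cube'] at hp hq
  obtain ⟨⟨ha0,ha1⟩,⟨hb0,hb1⟩,⟨hc0,hc1⟩,⟨hd0,hd1⟩⟩ := hp
  obtain ⟨⟨ha0',ha1'⟩,⟨hb0',hb1'⟩,⟨hc0',hc1'⟩,⟨hd0',hd1'⟩⟩ := hq
  simp only [f2, Prod.mk.injEq] at h ⊢
  obtain ⟨⟨e1,e2⟩,e3,e4⟩ := h
  have ha : a = a' := by simpa using e1
  subst ha
  have hb : b = b' := mul_left_cancel₀ (ne_of_gt ha0) e2
  subst hb
  have h3 : 1 - b*c*d = 1 - b*c'*d' := mul_left_cancel₀ (ne_of_gt ha0) e3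
  have hbcd : b*c*d = b*c'*d' := by linarith
  have h4 : b*c*(1-d) = b*c'*(1-d') := mul_left_cancel₀ (ne_of_gt ha0) e4
  have hbc : b*c = b*c' := by linear_combination h4 + hbcd
  have hc : c = c' := mul_left_cancel₀ (ne_of_gt hb0) hbc
  subst hc
  have hd : d = d' := mul_left_cancel₀ (ne_of_gt (mul_pos hb0 hc0)) hbcd
  simp [hd]

lemma f2_image : f2 '' cube = D2 := by
  ext ⟨⟨u,v⟩,⟨w,z⟩⟩
  constructor
  · rintro ⟨⟨⟨a,b⟩,⟨c,d⟩⟩, hp, hfp⟩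
    rw [mem_cube'] at hp
    obtain ⟨⟨ha0,ha1⟩,⟨hb0,hb1⟩,⟨hc0,hc1⟩,⟨hd0,hd1⟩⟩ := hp
    simp only [f2, Prod.mk.injEq] at hfp
    obtain ⟨⟨rfl,rfl⟩,rfl,rfl⟩ := hfp
    rw [mem_D2']
    refine ⟨⟨⟨?_,?_,?_⟩,?_,?_,?_⟩,?_,?_⟩
    · nlinarith [mul_pos ha0 hb0]
    · nlinarith [mul_pos ha0 (sub_pos.2 hb1)]
    · linarith
    · nlinarith [mul_pos (mul_pos (mul_pos ha0 hb0) hc0) (sub_pos.2 hd1)]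
    · nlinarith [mul_pos ha0 (sub_pos.2 hb1), mul_pos (mul_pos ha0 hb0) (sub_pos.2 hc1)]
    · nlinarith [mul_pos (mul_pos (mul_pos ha0 hb0) hc0) hd0]
    · nlinarith [mul_pos (mul_pos (mul_pos ha0 hb0) hc0) hd0]
    · nlinarith [mul_pos (mul_pos ha0 hb0) (sub_pos.2 hc1)]
  · intro h
    rw [mem_D2'] at h
    obtain ⟨⟨⟨hv0, hvu, hu1⟩, ⟨hz0, hzw, hw1⟩⟩, h1, h2⟩ := h
    have hu0 : 0 < u := by linarith
    have hs : 0 < u - w + z := by linarith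
    refine ⟨((u, v/u), ((u - w + z)/v, (u - w)/(u - w + z))), ?_, ?_⟩
    · rw [mem_cube']
      exact ⟨⟨hu0, hu1⟩, ⟨div_pos hv0 hu0, (div_lt_one hu0).2 hvu⟩,
        ⟨div_pos hs hv0, (div_lt_one hv0).2 (by linarith)⟩,
        ⟨div_pos (by linarith) hs, (div_lt_one hs).2 (by linarith)⟩⟩
    · simp only [f2, Prod.mk.injEq]
      refine ⟨⟨?_, ?_⟩, ?_, ?_⟩ <;> field_simp <;> ring

def D3 : Set E4 := {p | p ∈ PP ∧ p.1.1 < p.2.1 ∧ p.2.2 < p.2.1 - p.1.1}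
lemma mem_D3' {u v w z : ℝ} : ((u,v),(w,z)) ∈ D3 ↔
    ((0 < v ∧ v < u ∧ u < 1) ∧ (0 < z ∧ z < w ∧ w < 1)) ∧ u < w ∧ z < w - u := by
  rw [D3, mem_setOf_eq, mem_PP']

lemma f3_inj : InjOn f3 cube := by
  rintro ⟨⟨a,b⟩,⟨c,d⟩⟩ hp ⟨⟨a',b'⟩,⟨c',d'⟩⟩ hq h
  rw [mem_cube'] at hp hq
  obtain ⟨⟨ha0,ha1⟩,⟨hb0,hb1⟩,⟨hc0,hc1⟩,⟨hd0,hd1⟩⟩ := hp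
  obtain ⟨⟨ha0',ha1'⟩,⟨hb0',hb1'⟩,⟨hc0',hc1'⟩,⟨hd0',hd1'⟩⟩ := hq
  simp only [f3, Prod.mk.injEq] at h ⊢
  obtain ⟨⟨e1,e2⟩,e3,e4⟩ := h
  have ha : a = a' := by simpa using e3
  subst ha
  have h1' : 1 - b*c = 1 - b'*c' := mul_left_cancel₀ (ne_of_gt ha0) e1
  have hbc : b*c = b'*c' := by linarith
  have h2' : b*(1-c) = b'*(1-c') := mul_left_cancel₀ (ne_of_gt ha0) e2
  have hb : b = b' := by linear_combination h2' + hbc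
  subst hb
  have hc : c = c' := mul_left_cancel₀ (ne_of_gt hb0) hbc
  subst hc
  have h4' : b*c*d = b*c*d' := mul_left_cancel₀ (ne_of_gt ha0) e4
  have hd : d = d' := mul_left_cancel₀ (ne_of_gt (mul_pos hb0 hc0)) h4'
  simp [hd]

lemma f3_image : f3 '' cube = D3 := by
  ext ⟨⟨u,v⟩,⟨w,z⟩⟩
  constructor
  · rintro ⟨⟨⟨a,b⟩,⟨c,d⟩⟩, hp, hfp⟩
    rw [mem_cube'] at hp
    obtain ⟨⟨ha0,ha1⟩,⟨hb0,hb1⟩,⟨hc0,hc1⟩,⟨hd0,hd1⟩⟩ := hp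
    simp only [f3, Prod.mk.injEq] at hfp
    obtain ⟨⟨rfl,rfl⟩,rfl,rfl⟩ := hfp
    rw [mem_D3']
    refine ⟨⟨⟨?_,?_,?_⟩,?_,?_,?_⟩,?_,?_⟩
    · nlinarith [mul_pos (mul_pos ha0 hb0) (sub_pos.2 hc1)]
    · nlinarith [mul_pos ha0 (sub_pos.2 hb1)]
    · nlinarith [mul_pos (mul_pos ha0 hb0) hc0]
    · nlinarith [mul_pos (mul_pos (mul_pos ha0 hb0) hc0) hd0]
    · nlinarith [mul_pos ha0 (sub_pos.2 hb1), mul_pos (mul_pos ha0 hb0) (sub_pos.2 hc1), mul_pos (mul_pos (mul_pos ha0 hb0) hc0) (sub_pos.2 hd1)]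
    · linarith
    · nlinarith [mul_pos (mul_pos ha0 hb0) hc0]
    · nlinarith [mul_pos (mul_pos (mul_pos ha0 hb0) hc0) (sub_pos.2 hd1)]
  · intro h
    rw [mem_D3'] at h
    obtain ⟨⟨⟨hv0, hvu, hu1⟩, ⟨hz0, hzw, hw1⟩⟩, h1, h2⟩ := h
    have hw0 : 0 < w := by linarith
    have hwu : 0 < w - u := by linarith
    have ht : 0 < w - u + v := by linarith
    refine ⟨((w, (w - u + v)/w), ((w - u)/(w - u + v), z/(w - u))), ?_, ?_⟩
    · rw [mem_cube']
      exact ⟨⟨hw0, hw1⟩, ⟨div_pos ht hw0, (div_lt_one hw0).2 (by linarith)⟩,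
        ⟨div_pos hwu ht, (div_lt_one ht).2 (by linarith)⟩,
        ⟨div_pos hz0 hwu, (div_lt_one hwu).2 (by linarith)⟩⟩
    · simp only [f3, Prod.mk.injEq]
      refine ⟨⟨?_, ?_⟩, ?_, ?_⟩ <;> field_simp <;> ring

def D4 : Set E4 := {p | p ∈ PP ∧ p.1.1 < p.2.1 ∧ p.2.1 - p.1.1 < p.2.2 - p.1.2}
lemma mem_D4' {u v w z : ℝ} : ((u,v),(w,z)) ∈ D4 ↔
    ((0 < v ∧ v < u ∧ u < 1) ∧ (0 < z ∧ z < w ∧ w < 1)) ∧ u < w ∧ w - u < z - v := by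
  rw [D4, mem_setOf_eq, mem_PP']

lemma f4_inj : InjOn f4 cube := by
  rintro ⟨⟨a,b⟩,⟨c,d⟩⟩ hp ⟨⟨a',b'⟩,⟨c',d'⟩⟩ hq h
  rw [mem_cube'] at hp hq
  obtain ⟨⟨ha0,ha1⟩,⟨hb0,hb1⟩,⟨hc0,hc1⟩,⟨hd0,hd1⟩⟩ := hp
  obtain ⟨⟨ha0',ha1'⟩,⟨hb0',hb1'⟩,⟨hc0',hc1'⟩,⟨hd0',hd1'⟩⟩ := hq
  simp only [f4, Prod.mk.injEq] at h ⊢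
  obtain ⟨⟨e1,e2⟩,e3,e4⟩ := h
  have ha : a = a' := by simpa using e3
  subst ha
  have hb : b = b' := mul_left_cancel₀ (ne_of_gt ha0) e4
  subst hb
  have h1' : 1 - b*c*d = 1 - b*c'*d' := mul_left_cancel₀ (ne_of_gt ha0) e1
  have hbcd : b*c*d = b*c'*d' := by linarith
  have h2' : b*c*(1-d) = b*c'*(1-d') := mul_left_cancel₀ (ne_of_gt ha0) e2
  have hbc : b*c = b*c' := by linear_combination h2' + hbcd
  have hc : c = c' := mul_left_cancel₀ (ne_of_gt hb0) hbc
  subst hc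
  have hd : d = d' := mul_left_cancel₀ (ne_of_gt (mul_pos hb0 hc0)) hbcd
  simp [hd]

lemma f4_image : f4 '' cube = D4 := by
  ext ⟨⟨u,v⟩,⟨w,z⟩⟩
  constructor
  · rintro ⟨⟨⟨a,b⟩,⟨c,d⟩⟩, hp, hfp⟩
    rw [mem_cube'] at hp
    obtain ⟨⟨ha0,ha1⟩,⟨hb0,hb1⟩,⟨hc0,hc1⟩,⟨hd0,hd1⟩⟩ := hp
    simp only [f4, Prod.mk.injEq] at hfp
    obtain ⟨⟨rfl,rfl⟩,rfl,rfl⟩ := hfp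
    rw [mem_D4']
    refine ⟨⟨⟨?_,?_,?_⟩,?_,?_,?_⟩,?_,?_⟩
    · nlinarith [mul_pos (mul_pos (mul_pos ha0 hb0) hc0) (sub_pos.2 hd1)]
    · nlinarith [mul_pos ha0 (sub_pos.2 hb1), mul_pos (mul_pos ha0 hb0) (sub_pos.2 hc1)]
    · nlinarith [mul_pos (mul_pos (mul_pos ha0 hb0) hc0) hd0]
    · nlinarith [mul_pos ha0 hb0]
    · nlinarith [mul_pos ha0 (sub_pos.2 hb1)]
    · linarith
    · nlinarith [mul_pos (mul_pos (mul_pos ha0 hb0) hc0) hd0]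
    · nlinarith [mul_pos (mul_pos ha0 hb0) (sub_pos.2 hc1)]
  · intro h
    rw [mem_D4'] at h
    obtain ⟨⟨⟨hv0, hvu, hu1⟩, ⟨hz0, hzw, hw1⟩⟩, h1, h2⟩ := h
    have hw0 : 0 < w := by linarith
    have hwu : 0 < w - u := by linarith
    have ht : 0 < w - u + v := by linarith
    refine ⟨((w, z/w), ((w - u + v)/z, (w - u)/(w - u + v))), ?_, ?_⟩
    · rw [mem_cube']
      exact ⟨⟨hw0, hw1⟩, ⟨div_pos hz0 hw0, (div_lt_one hw0).2 hzw⟩,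
        ⟨div_pos ht hz0, (div_lt_one hz0).2 (by linarith)⟩,
        ⟨div_pos hwu ht, (div_lt_one ht).2 (by linarith)⟩⟩
    · simp only [f4, Prod.mk.injEq]
      refine ⟨⟨?_, ?_⟩, ?_, ?_⟩ <;> field_simp <;> ring

def D5 : Set E4 := {p | p ∈ PP ∧ p.1.1 < p.2.1 ∧ p.2.1 - p.1.1 < p.2.2 ∧ p.2.2 - p.1.2 < p.2.1 - p.1.1}
lemma mem_D5' {u v w z : ℝ} : ((u,v),(w,z)) ∈ D5 ↔
    ((0 < v ∧ v < u ∧ u < 1) ∧ (0 < z ∧ z < w ∧ w < 1)) ∧ u < w ∧ w - u < z ∧ z - v < w - u := by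
  rw [D5, mem_setOf_eq, mem_PP']

lemma f5_inj : InjOn f5 cube := by
  rintro ⟨⟨a,b⟩,⟨c,d⟩⟩ hp ⟨⟨a',b'⟩,⟨c',d'⟩⟩ hq h
  rw [mem_cube'] at hp hq
  obtain ⟨⟨ha0,ha1⟩,⟨hb0,hb1⟩,⟨hc0,hc1⟩,⟨hd0,hd1⟩⟩ := hp
  obtain ⟨⟨ha0',ha1'⟩,⟨hb0',hb1'⟩,⟨hc0',hc1'⟩,⟨hd0',hd1'⟩⟩ := hq
  simp only [f5, Prod.mk.injEq] at h ⊢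
  obtain ⟨⟨e1,e2⟩,e3,e4⟩ := h
  have ha : a = a' := by simpa using e3
  subst ha
  have h1' : 1 - b*c*d = 1 - b'*c'*d' := mul_left_cancel₀ (ne_of_gt ha0) e1
  have hbcd : b*c*d = b'*c'*d' := by linarith
  have h2' : b*(1-c*d) = b'*(1-c'*d') := mul_left_cancel₀ (ne_of_gt ha0) e2
  have hb : b = b' := by linear_combination h2' + hbcd
  subst hb
  have hbc : b*c = b*c' := mul_left_cancel₀ (ne_of_gt ha0) e4
  have hc : c = c' := mul_left_cancel₀ (ne_of_gt hb0) hbc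
  subst hc
  have hd : d = d' := mul_left_cancel₀ (ne_of_gt (mul_pos hb0 hc0)) hbcd
  simp [hd]

lemma f5_image : f5 '' cube = D5 := by
  ext ⟨⟨u,v⟩,⟨w,z⟩⟩
  constructor
  · rintro ⟨⟨⟨a,b⟩,⟨c,d⟩⟩, hp, hfp⟩
    rw [mem_cube'] at hp
    obtain ⟨⟨ha0,ha1⟩,⟨hb0,hb1⟩,⟨hc0,hc1⟩,⟨hd0,hd1⟩⟩ := hp
    simp only [f5, Prod.mk.injEq] at hfp
    obtain ⟨⟨rfl,rfl⟩,rfl,rfl⟩ := hfp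
    rw [mem_D5']
    refine ⟨⟨⟨?_,?_,?_⟩,?_,?_,?_⟩,?_,?_,?_⟩
    · nlinarith [mul_pos (mul_pos ha0 hb0) (sub_pos.2 hd1), mul_pos (mul_pos (mul_pos ha0 hb0) hd0) (sub_pos.2 hc1)]
    · nlinarith [mul_pos ha0 (sub_pos.2 hb1)]
    · nlinarith [mul_pos (mul_pos (mul_pos ha0 hb0) hc0) hd0]
    · nlinarith [mul_pos (mul_pos ha0 hb0) hc0]
    · nlinarith [mul_pos ha0 (sub_pos.2 hb1), mul_pos (mul_pos ha0 hb0) (sub_pos.2 hc1)]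
    · linarith
    · nlinarith [mul_pos (mul_pos (mul_pos ha0 hb0) hc0) hd0]
    · nlinarith [mul_pos (mul_pos (mul_pos ha0 hb0) hc0) (sub_pos.2 hd1)]
    · nlinarith [mul_pos (mul_pos ha0 hb0) (sub_pos.2 hc1)]
  · intro h
    rw [mem_D5'] at h
    obtain ⟨⟨⟨hv0, hvu, hu1⟩, ⟨hz0, hzw, hw1⟩⟩, h1, h2, h3⟩ := h
    have hw0 : 0 < w := by linarith
    have hwu : 0 < w - u := by linarith
    have ht : 0 < w - u + v := by linarith
    refine ⟨((w, (w - u + v)/w), (z/(w - u + v), (w - u)/z)), ?_, ?_⟩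
    · rw [mem_cube']
      exact ⟨⟨hw0, hw1⟩, ⟨div_pos ht hw0, (div_lt_one hw0).2 (by linarith)⟩,
        ⟨div_pos hz0 ht, (div_lt_one ht).2 (by linarith)⟩,
        ⟨div_pos hwu hz0, (div_lt_one hz0).2 (by linarith)⟩⟩
    · simp only [f5, Prod.mk.injEq]
      refine ⟨⟨?_, ?_⟩, ?_, ?_⟩ <;> field_simp <;> ring

lemma isOpen_refTri : IsOpen refTri := by
  have : refTri = {p : ℝ×ℝ | 0 < p.2} ∩ ({p : ℝ×ℝ | p.2 < p.1} ∩ {p : ℝ×ℝ | p.1 < 1}) := by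
    ext p; simp [refTri, and_assoc]
  rw [this]
  exact (isOpen_lt continuous_const continuous_snd).inter
    ((isOpen_lt continuous_snd continuous_fst).inter (isOpen_lt continuous_fst continuous_const))

lemma isOpen_PP : IsOpen PP := isOpen_refTri.prod isOpen_refTri

lemma cont11 : Continuous fun p : E4 => p.1.1 := by fun_prop
lemma cont12 : Continuous fun p : E4 => p.1.2 := by fun_prop
lemma cont21 : Continuous fun p : E4 => p.2.1 := by fun_prop
lemma cont22 : Continuous fun p : E4 => p.2.2 := by fun_prop

lemma isOpen_D1 : IsOpen D1 := by
  have : D1 = PP ∩ ({p : E4 | p.2.1 < p.1.1} ∩ {p : E4 | p.1.2 - p.2.2 < p.1.1 - p.2.1}) := by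
    ext p; simp only [D1, mem_setOf_eq, mem_inter_iff, and_assoc]
  rw [this]
  exact isOpen_PP.inter ((isOpen_lt cont21 cont11).inter
    (isOpen_lt (cont12.sub cont22) (cont11.sub cont21)))

lemma isOpen_D2 : IsOpen D2 := by
  have : D2 = PP ∩ ({p : E4 | p.2.1 < p.1.1} ∩ {p : E4 | p.1.1 - p.2.1 < p.1.2 - p.2.2}) := by
    ext p; simp only [D2, mem_setOf_eq, mem_inter_iff, and_assoc]
  rw [this]
  exact isOpen_PP.inter ((isOpen_lt cont21 cont11).inter
    (isOpen_lt (cont11.sub cont21) (cont12.sub cont22)))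

lemma isOpen_D3 : IsOpen D3 := by
  have : D3 = PP ∩ ({p : E4 | p.1.1 < p.2.1} ∩ {p : E4 | p.2.2 < p.2.1 - p.1.1}) := by
    ext p; simp only [D3, mem_setOf_eq, mem_inter_iff, and_assoc]
  rw [this]
  exact isOpen_PP.inter ((isOpen_lt cont11 cont21).inter
    (isOpen_lt cont22 (cont21.sub cont11)))

lemma isOpen_D4 : IsOpen D4 := by
  have : D4 = PP ∩ ({p : E4 | p.1.1 < p.2.1} ∩ {p : E4 | p.2.1 - p.1.1 < p.2.2 - p.1.2}) := by
    ext p; simp only [D4, mem_setOf_eq, mem_inter_iff, and_assoc]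
  rw [this]
  exact isOpen_PP.inter ((isOpen_lt cont11 cont21).inter
    (isOpen_lt (cont21.sub cont11) (cont22.sub cont12)))

lemma isOpen_D5 : IsOpen D5 := by
  have : D5 = PP ∩ ({p : E4 | p.1.1 < p.2.1} ∩ ({p : E4 | p.2.1 - p.1.1 < p.2.2} ∩
      {p : E4 | p.2.2 - p.1.2 < p.2.1 - p.1.1})) := by
    ext p; simp only [D5, mem_setOf_eq, mem_inter_iff, and_assoc]
  rw [this]
  exact isOpen_PP.inter ((isOpen_lt cont11 cont21).inter
    ((isOpen_lt (cont21.sub cont11) cont22).inter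
      (isOpen_lt (cont22.sub cont12) (cont21.sub cont11))))

instance : (volume : Measure (ℝ×ℝ)).IsAddHaarMeasure :=
  (inferInstance : ((volume : Measure ℝ).prod volume).IsAddHaarMeasure)
instance : (volume : Measure E4).IsAddHaarMeasure :=
  (inferInstance : ((volume : Measure (ℝ×ℝ)).prod volume).IsAddHaarMeasure)

lemma meas_cube : MeasurableSet cube :=
  ((measurableSet_Ioo.prod measurableSet_Ioo).prod (measurableSet_Ioo.prod measurableSet_Ioo))

/-- hyperplane null -/
lemma null_of_form (l : E4 →L[ℝ] ℝ) (v : E4) (hv : l v ≠ 0) :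
    volume {p : E4 | l p = 0} = 0 := by
  have h : {p : E4 | l p = 0} = (LinearMap.ker (l : E4 →ₗ[ℝ] ℝ) : Set E4) := by
    ext p; simp [LinearMap.mem_ker]
  rw [h]
  refine Measure.addHaar_submodule _ _ (fun htop => hv ?_)
  have : v ∈ LinearMap.ker (l : E4 →ₗ[ℝ] ℝ) := htop ▸ Submodule.mem_top
  simpa using this

lemma cover_null : volume (PP \ (D1 ∪ (D2 ∪ (D3 ∪ (D4 ∪ D5))))) = 0 := by
  have hsub : PP \ (D1 ∪ (D2 ∪ (D3 ∪ (D4 ∪ D5)))) ⊆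
      {p : E4 | (P1 - P3) p = 0} ∪ ({p : E4 | (P1 - P2 - P3 + P4) p = 0} ∪
        {p : E4 | (P1 - P3 + P4) p = 0}) := by
    rintro ⟨⟨u,v⟩,⟨w,z⟩⟩ ⟨hPP, hnot⟩
    simp only [mem_union, not_or] at hnot
    obtain ⟨h1, h2, h3, h4, h5⟩ := hnot
    rw [mem_PP'] at hPP
    obtain ⟨⟨hv0, hvu, hu1⟩, ⟨hz0, hzw, hw1⟩⟩ := hPP
    have n1 : ¬(w < u ∧ v - z < u - w) := fun hh => h1 (mem_D1'.2 ⟨⟨⟨hv0,hvu,hu1⟩,⟨hz0,hzw,hw1⟩⟩, hh.1, hh.2⟩)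
    have n2 : ¬(w < u ∧ u - w < v - z) := fun hh => h2 (mem_D2'.2 ⟨⟨⟨hv0,hvu,hu1⟩,⟨hz0,hzw,hw1⟩⟩, hh.1, hh.2⟩)
    have n3 : ¬(u < w ∧ z < w - u) := fun hh => h3 (mem_D3'.2 ⟨⟨⟨hv0,hvu,hu1⟩,⟨hz0,hzw,hw1⟩⟩, hh.1, hh.2⟩)
    have n4 : ¬(u < w ∧ w - u < z - v) := fun hh => h4 (mem_D4'.2 ⟨⟨⟨hv0,hvu,hu1⟩,⟨hz0,hzw,hw1⟩⟩, hh.1, hh.2⟩)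
    have n5 : ¬(u < w ∧ w - u < z ∧ z - v < w - u) :=
      fun hh => h5 (mem_D5'.2 ⟨⟨⟨hv0,hvu,hu1⟩,⟨hz0,hzw,hw1⟩⟩, hh.1, hh.2.1, hh.2.2⟩)
    simp only [mem_union, mem_setOf_eq, ContinuousLinearMap.sub_apply,
      ContinuousLinearMap.add_apply, P1_apply, P2_apply, P3_apply, P4_apply]
    push_neg at n1 n2 n3 n4 n5
    rcases lt_trichotomy u w with hlt | heq | hgt
    · -- u < w
      rcases lt_trichotomy z (w - u) with hz | hz | hz
      · exfalso; linarith [n3 hlt]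
      · right; right; linarith
      · have hge := n4 hlt
        have := n5 hlt (by linarith)
        right; left; linarith
    · left; linarith
    · have := n1 hgt
      have := n2 hgt
      right; left; linarith
  refine measure_mono_null hsub ?_
  refine measure_union_null ?_ (measure_union_null ?_ ?_)
  · exact null_of_form _ ((1,0),(0,0)) (by norm_num)
  · exact null_of_form _ ((1,0),(0,0)) (by norm_num)
  · exact null_of_form _ ((1,0),(0,0)) (by norm_num)
lemma disj12 : Disjoint D1 D2 := by
  rw [Set.disjoint_left]
  rintro ⟨⟨u,v⟩,⟨w,z⟩⟩ h h'
  rw [mem_D1'] at h; rw [mem_D2'] at h'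
  obtain ⟨-, -, h2⟩ := h; obtain ⟨-, -, h2'⟩ := h'; linarith

lemma disj13 : Disjoint D1 D3 := by
  rw [Set.disjoint_left]
  rintro ⟨⟨u,v⟩,⟨w,z⟩⟩ h h'
  rw [mem_D1'] at h; rw [mem_D3'] at h'
  obtain ⟨-, h1, -⟩ := h; obtain ⟨-, h1', -⟩ := h'; linarith

lemma disj14 : Disjoint D1 D4 := by
  rw [Set.disjoint_left]
  rintro ⟨⟨u,v⟩,⟨w,z⟩⟩ h h'
  rw [mem_D1'] at h; rw [mem_D4'] at h'
  obtain ⟨-, h1, -⟩ := h; obtain ⟨-, h1', -⟩ := h'; linarith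

lemma disj15 : Disjoint D1 D5 := by
  rw [Set.disjoint_left]
  rintro ⟨⟨u,v⟩,⟨w,z⟩⟩ h h'
  rw [mem_D1'] at h; rw [mem_D5'] at h'
  obtain ⟨-, h1, -⟩ := h; obtain ⟨-, h1', -⟩ := h'; linarith

lemma disj23 : Disjoint D2 D3 := by
  rw [Set.disjoint_left]
  rintro ⟨⟨u,v⟩,⟨w,z⟩⟩ h h'
  rw [mem_D2'] at h; rw [mem_D3'] at h'
  obtain ⟨-, h1, -⟩ := h; obtain ⟨-, h1', -⟩ := h'; linarith

lemma disj24 : Disjoint D2 D4 := by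
  rw [Set.disjoint_left]
  rintro ⟨⟨u,v⟩,⟨w,z⟩⟩ h h'
  rw [mem_D2'] at h; rw [mem_D4'] at h'
  obtain ⟨-, h1, -⟩ := h; obtain ⟨-, h1', -⟩ := h'; linarith

lemma disj25 : Disjoint D2 D5 := by
  rw [Set.disjoint_left]
  rintro ⟨⟨u,v⟩,⟨w,z⟩⟩ h h'
  rw [mem_D2'] at h; rw [mem_D5'] at h'
  obtain ⟨-, h1, -⟩ := h; obtain ⟨-, h1', -⟩ := h'; linarith

lemma disj34 : Disjoint D3 D4 := by
  rw [Set.disjoint_left]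
  rintro ⟨⟨u,v⟩,⟨w,z⟩⟩ h h'
  rw [mem_D3'] at h; rw [mem_D4'] at h'
  obtain ⟨⟨⟨hv0,-,-⟩,-⟩, -, h2⟩ := h; obtain ⟨-, -, h2'⟩ := h'; linarith

lemma disj35 : Disjoint D3 D5 := by
  rw [Set.disjoint_left]
  rintro ⟨⟨u,v⟩,⟨w,z⟩⟩ h h'
  rw [mem_D3'] at h; rw [mem_D5'] at h'
  obtain ⟨-, -, h2⟩ := h; obtain ⟨-, -, h2', -⟩ := h'; linarith

lemma disj45 : Disjoint D4 D5 := by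
  rw [Set.disjoint_left]
  rintro ⟨⟨u,v⟩,⟨w,z⟩⟩ h h'
  rw [mem_D4'] at h; rw [mem_D5'] at h'
  obtain ⟨-, -, h2⟩ := h; obtain ⟨-, -, -, h3'⟩ := h'; linarith

lemma hcont1 : Continuous f1 := by unfold f1; fun_prop
lemma hcont2 : Continuous f2 := by unfold f2; fun_prop
lemma hcont3 : Continuous f3 := by unfold f3; fun_prop
lemma hcont4 : Continuous f4 := by unfold f4; fun_prop
lemma hcont5 : Continuous f5 := by unfold f5; fun_prop

lemma cov1 (q : E4 → ℝ≥0∞) :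
    ∫⁻ p in D1, q p = ∫⁻ p in cube, ENNReal.ofReal (p.1.1^3 * p.1.2^2) * q (f1 p) := by
  rw [← f1_image,
    lintegral_image_eq_lintegral_abs_det_fderiv_mul volume meas_cube
      (fun p _ => (f1_deriv p).hasFDerivWithinAt) f1_inj q]
  refine setLIntegral_congr_fun meas_cube ?_
  rintro ⟨⟨a,b⟩,⟨c,d⟩⟩ hp
  rw [mem_cube'] at hp
  obtain ⟨⟨ha0,-⟩,⟨hb0,-⟩,⟨hc0,-⟩,⟨hd0,-⟩⟩ := hp
  dsimp only
  rw [f1_det, abs_of_pos (by positivity)]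

lemma cov2 (q : E4 → ℝ≥0∞) :
    ∫⁻ p in D2, q p = ∫⁻ p in cube, ENNReal.ofReal (p.1.1^3 * p.1.2^2 * p.2.1) * q (f2 p) := by
  rw [← f2_image,
    lintegral_image_eq_lintegral_abs_det_fderiv_mul volume meas_cube
      (fun p _ => (f2_deriv p).hasFDerivWithinAt) f2_inj q]
  refine setLIntegral_congr_fun meas_cube ?_
  rintro ⟨⟨a,b⟩,⟨c,d⟩⟩ hp
  rw [mem_cube'] at hp
  obtain ⟨⟨ha0,-⟩,⟨hb0,-⟩,⟨hc0,-⟩,⟨hd0,-⟩⟩ := hp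
  dsimp only
  rw [f2_det, abs_of_pos (by positivity)]

lemma cov3 (q : E4 → ℝ≥0∞) :
    ∫⁻ p in D3, q p = ∫⁻ p in cube, ENNReal.ofReal (p.1.1^3 * p.1.2^2 * p.2.1) * q (f3 p) := by
  rw [← f3_image,
    lintegral_image_eq_lintegral_abs_det_fderiv_mul volume meas_cube
      (fun p _ => (f3_deriv p).hasFDerivWithinAt) f3_inj q]
  refine setLIntegral_congr_fun meas_cube ?_
  rintro ⟨⟨a,b⟩,⟨c,d⟩⟩ hp
  rw [mem_cube'] at hp
  obtain ⟨⟨ha0,-⟩,⟨hb0,-⟩,⟨hc0,-⟩,⟨hd0,-⟩⟩ := hp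
  dsimp only
  rw [f3_det, abs_of_pos (by positivity)]

lemma cov4 (q : E4 → ℝ≥0∞) :
    ∫⁻ p in D4, q p = ∫⁻ p in cube, ENNReal.ofReal (p.1.1^3 * p.1.2^2 * p.2.1) * q (f4 p) := by
  rw [← f4_image,
    lintegral_image_eq_lintegral_abs_det_fderiv_mul volume meas_cube
      (fun p _ => (f4_deriv p).hasFDerivWithinAt) f4_inj q]
  refine setLIntegral_congr_fun meas_cube ?_
  rintro ⟨⟨a,b⟩,⟨c,d⟩⟩ hp
  rw [mem_cube'] at hp
  obtain ⟨⟨ha0,-⟩,⟨hb0,-⟩,⟨hc0,-⟩,⟨hd0,-⟩⟩ := hp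
  dsimp only
  rw [f4_det, abs_of_pos (by positivity)]

lemma cov5 (q : E4 → ℝ≥0∞) :
    ∫⁻ p in D5, q p = ∫⁻ p in cube, ENNReal.ofReal (p.1.1^3 * p.1.2^2 * p.2.1) * q (f5 p) := by
  rw [← f5_image,
    lintegral_image_eq_lintegral_abs_det_fderiv_mul volume meas_cube
      (fun p _ => (f5_deriv p).hasFDerivWithinAt) f5_inj q]
  refine setLIntegral_congr_fun meas_cube ?_
  rintro ⟨⟨a,b⟩,⟨c,d⟩⟩ hp
  rw [mem_cube'] at hp
  obtain ⟨⟨ha0,-⟩,⟨hb0,-⟩,⟨hc0,-⟩,⟨hd0,-⟩⟩ := hp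
  dsimp only
  rw [f5_det, abs_neg, abs_of_pos (by positivity)]

theorem regularisation_common_edge'
    (q : (ℝ × ℝ) × (ℝ × ℝ) → ℝ≥0∞) (hq : Measurable q) :
    ∫⁻ p in PP, q p
      = ∫⁻ p in cube, ENNReal.ofReal (p.1.1 ^ 3 * p.1.2 ^ 2) *
          (q (f1 p) + ENNReal.ofReal p.2.1 * (q (f2 p) + q (f3 p) + q (f4 p) + q (f5 p))) := by
  have hpoly : Measurable fun p : E4 => ENNReal.ofReal (p.1.1^3 * p.1.2^2) :=
    ENNReal.measurable_ofReal.comp (by fun_prop : Continuous fun p : E4 => p.1.1^3 * p.1.2^2).measurable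
  have hpoly' : Measurable fun p : E4 => ENNReal.ofReal (p.1.1^3 * p.1.2^2 * p.2.1) :=
    ENNReal.measurable_ofReal.comp
      (by fun_prop : Continuous fun p : E4 => p.1.1^3 * p.1.2^2 * p.2.1).measurable
  have hG1 : Measurable fun p : E4 => ENNReal.ofReal (p.1.1^3 * p.1.2^2) * q (f1 p) :=
    hpoly.mul (hq.comp hcont1.measurable)
  have hG2 : Measurable fun p : E4 => ENNReal.ofReal (p.1.1^3 * p.1.2^2 * p.2.1) * q (f2 p) :=
    hpoly'.mul (hq.comp hcont2.measurable)
  have hG3 : Measurable fun p : E4 => ENNReal.ofReal (p.1.1^3 * p.1.2^2 * p.2.1) * q (f3 p) :=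
    hpoly'.mul (hq.comp hcont3.measurable)
  have hG4 : Measurable fun p : E4 => ENNReal.ofReal (p.1.1^3 * p.1.2^2 * p.2.1) * q (f4 p) :=
    hpoly'.mul (hq.comp hcont4.measurable)
  have hU : (PP : Set E4) =ᵐ[volume] ((D1 ∪ (D2 ∪ (D3 ∪ (D4 ∪ D5)))) : Set E4) := by
    rw [MeasureTheory.ae_eq_set]
    constructor
    · exact cover_null
    · have hsub : (D1 ∪ (D2 ∪ (D3 ∪ (D4 ∪ D5)))) ⊆ PP := by
        rintro p (h | h | h | h | h) <;> exact h.1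
      simp [Set.diff_eq_empty.2 hsub]
  calc ∫⁻ p in PP, q p
      = ∫⁻ p in D1 ∪ (D2 ∪ (D3 ∪ (D4 ∪ D5))), q p := setLIntegral_congr hU
    _ = (∫⁻ p in D1, q p) + ((∫⁻ p in D2, q p) + ((∫⁻ p in D3, q p) +
          ((∫⁻ p in D4, q p) + ∫⁻ p in D5, q p))) := by
        rw [lintegral_union (isOpen_D2.measurableSet.union (isOpen_D3.measurableSet.union
              (isOpen_D4.measurableSet.union isOpen_D5.measurableSet)))
            (disj12.union_right (disj13.union_right (disj14.union_right disj15))),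
          lintegral_union (isOpen_D3.measurableSet.union
              (isOpen_D4.measurableSet.union isOpen_D5.measurableSet))
            (disj23.union_right (disj24.union_right disj25)),
          lintegral_union (isOpen_D4.measurableSet.union isOpen_D5.measurableSet)
            (disj34.union_right disj35),
          lintegral_union isOpen_D5.measurableSet disj45]
    _ = ∫⁻ p in cube, (ENNReal.ofReal (p.1.1^3 * p.1.2^2) * q (f1 p) +
          (ENNReal.ofReal (p.1.1^3 * p.1.2^2 * p.2.1) * q (f2 p) +
          (ENNReal.ofReal (p.1.1^3 * p.1.2^2 * p.2.1) * q (f3 p) +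
          (ENNReal.ofReal (p.1.1^3 * p.1.2^2 * p.2.1) * q (f4 p) +
           ENNReal.ofReal (p.1.1^3 * p.1.2^2 * p.2.1) * q (f5 p))))) := by
        rw [cov1 q, cov2 q, cov3 q, cov4 q, cov5 q,
          lintegral_add_left hG1, lintegral_add_left hG2, lintegral_add_left hG3,
          lintegral_add_left hG4]
    _ = ∫⁻ p in cube, ENNReal.ofReal (p.1.1 ^ 3 * p.1.2 ^ 2) *
          (q (f1 p) + ENNReal.ofReal p.2.1 * (q (f2 p) + q (f3 p) + q (f4 p) + q (f5 p))) := by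
        refine setLIntegral_congr_fun meas_cube ?_
        rintro ⟨⟨a,b⟩,⟨c,d⟩⟩ hp
        rw [mem_cube'] at hp
        obtain ⟨⟨ha0,-⟩,⟨hb0,-⟩,⟨hc0,-⟩,⟨hd0,-⟩⟩ := hp
        dsimp only
        have hsplit : ENNReal.ofReal (a^3*b^2*c) =
            ENNReal.ofReal (a^3*b^2) * ENNReal.ofReal c := by
          rw [← ENNReal.ofReal_mul (by positivity)]
        rw [hsplit]
        ring
end

end Aux

/-- The Sauter–Schwab regularising transformation for a pair of elements
sharing a common edge: writing `η = ((η₁,η₂),(η₃,η₄))`, a point of `ℝ⁴` is read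
as the pair `x = (A⁽¹⁾, A⁽²⁾)`, `y = (A⁽³⁾, A⁽⁴⁾)`. -/
theorem regularisation_common_edge
    (q : (ℝ × ℝ) × (ℝ × ℝ) → ℝ≥0∞) (hq : Measurable q) :
    ∫⁻ p in refTri ×ˢ refTri, q p
      = ∫⁻ η in ((Ioo (0:ℝ) 1) ×ˢ (Ioo (0:ℝ) 1)) ×ˢ ((Ioo (0:ℝ) 1) ×ˢ (Ioo (0:ℝ) 1)),
          ENNReal.ofReal (η.1.1 ^ 3 * η.1.2 ^ 2) *
            (q ((η.1.1 * 1, η.1.1 * (η.1.2 * η.2.2)),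
                (η.1.1 * (1 - η.1.2 * η.2.1), η.1.1 * (η.1.2 * (1 - η.2.1))))
              + ENNReal.ofReal η.2.1 *
                (q ((η.1.1 * 1, η.1.1 * η.1.2),
                    (η.1.1 * (1 - η.1.2 * η.2.1 * η.2.2),
                     η.1.1 * (η.1.2 * η.2.1 * (1 - η.2.2))))
                  + q ((η.1.1 * (1 - η.1.2 * η.2.1), η.1.1 * (η.1.2 * (1 - η.2.1))),
                      (η.1.1 * 1, η.1.1 * (η.1.2 * η.2.1 * η.2.2)))
                  + q ((η.1.1 * (1 - η.1.2 * η.2.1 * η.2.2),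
                       η.1.1 * (η.1.2 * η.2.1 * (1 - η.2.2))),
                      (η.1.1 * 1, η.1.1 * η.1.2))
                  + q ((η.1.1 * (1 - η.1.2 * η.2.1 * η.2.2),
                       η.1.1 * (η.1.2 * (1 - η.2.1 * η.2.2))),
                      (η.1.1 * 1, η.1.1 * (η.1.2 * η.2.1))))) := by
  exact regularisation_common_edge' q hq
end

section
/- For every measurable function q : ℝ² × ℝ² → [0,∞], ∫_{π×π} q(x,y) d(x,y) = ∫_{(0,1)⁴} η₁³ η₃ ( q(A₁(η)) + q(A₂(η)) ) dη, where a point A = (A^{(1)}, A^{(2)}, A^{(3)}, A^{(4)}) ∈ ℝ⁴ is read as the pair x = (A^{(1)}, A^{(2)}), y = (A^{(3)}, A^{(4)}), and where A₁(η) = η₁·(1, η₂, η₃, η₃η₄) and A₂(η) = η₁·(η₃, η₃η₄, 1, η₂). (This is the Sauter–Schwab regularising transformation for a pair of elements sharing a common vertex.) -/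
open MeasureTheory Set
open scoped ENNReal

namespace SauterSchwab

lemma scale1 {c : ℝ} (hc : 0 < c) (g : ℝ → ℝ≥0∞) :
    ∫⁻ t in Ioo 0 c, g t = ∫⁻ s in Ioo (0:ℝ) 1, ENNReal.ofReal c * g (c * s) := by
  have himg : (fun s : ℝ => c * s) '' Ioo 0 1 = Ioo 0 c := by
    rw [image_mul_left_Ioo hc]; simp
  have h := lintegral_image_eq_lintegral_abs_det_fderiv_mul (volume : Measure ℝ)
      (measurableSet_Ioo (a := (0:ℝ)) (b := 1))
      (f' := fun _ : ℝ => (1 : ℝ →L[ℝ] ℝ).smulRight c)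
      (f := fun s : ℝ => c * s)
      (fun x _ => ?_) (fun x _ y _ h => by
        simpa [mul_right_inj' hc.ne'] using h) g
  · rw [himg] at h
    rw [h]
    simp [ContinuousLinearMap.smulRight_one_eq_toSpanSingleton, ContinuousLinearMap.det_toSpanSingleton, abs_of_pos hc]
  · simpa [mul_comm, ContinuousLinearMap.smulRight_one_eq_toSpanSingleton] using ((hasDerivAt_id x).const_mul c).hasDerivWithinAt.hasFDerivWithinAt

/-- scaled open triangle -/
def tri (c : ℝ) : Set (ℝ × ℝ) := {p | 0 < p.2 ∧ p.2 < p.1 ∧ p.1 < c}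

lemma refTri_eq : refTri = tri 1 := rfl

lemma tri_meas (c : ℝ) : MeasurableSet (tri c) := by
  have : tri c = {p : ℝ × ℝ | 0 < p.2} ∩ ({p | p.2 < p.1} ∩ {p | p.1 < c}) := by
    ext p; simp [tri, and_assoc]
  rw [this]
  exact (measurableSet_lt measurable_const measurable_snd).inter
    ((measurableSet_lt measurable_snd measurable_fst).inter
      (measurableSet_lt measurable_fst measurable_const))

lemma triSlice (c : ℝ) (g : ℝ × ℝ → ℝ≥0∞) (hg : Measurable g) :
    ∫⁻ p in tri c, g p = ∫⁻ a in Ioo 0 c, ∫⁻ b in Ioo 0 a, g (a, b) := by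
  rw [← lintegral_indicator (tri_meas c), Measure.volume_eq_prod,
    MeasureTheory.lintegral_prod _ ((hg.indicator (tri_meas c)).aemeasurable)]
  rw [← lintegral_indicator measurableSet_Ioo]
  congr 1
  funext a
  by_cases ha : a ∈ Ioo (0:ℝ) c
  · rw [indicator_of_mem ha]
    have : ∀ b : ℝ, (tri c).indicator g (a, b) = (Ioo 0 a).indicator (fun b => g (a, b)) b := by
      intro b
      by_cases hb : b ∈ Ioo (0:ℝ) a
      · rw [indicator_of_mem hb,
          indicator_of_mem (show (a,b) ∈ tri c from ⟨hb.1, hb.2, ha.2⟩)]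
      · rw [indicator_of_notMem hb, indicator_of_notMem]
        intro hab
        exact hb ⟨hab.1, hab.2.1⟩
    simp_rw [this]
    rw [lintegral_indicator measurableSet_Ioo]
  · rw [indicator_of_notMem ha]
    have : ∀ b : ℝ, (tri c).indicator g (a, b) = 0 := by
      intro b
      rw [indicator_of_notMem]
      intro hab
      rcases hab with ⟨h1, h2, h3⟩
      simp only [mem_Ioo, not_and_or, not_lt] at ha
      rcases ha with ha | ha
      · exact absurd (h1.trans h2) (not_lt.2 ha)
      · exact absurd h3 (not_lt.2 ha)
    simp [this]

lemma prodSlice {α β : Type*} [MeasureSpace α] [MeasureSpace β]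
    [SigmaFinite (volume : Measure α)] [SigmaFinite (volume : Measure β)]
    {s : Set α} {t : Set β} (g : α × β → ℝ≥0∞) (hg : Measurable g) :
    ∫⁻ p in s ×ˢ t, g p = ∫⁻ a in s, ∫⁻ b in t, g (a, b) := by
  rw [Measure.volume_eq_prod, ← Measure.prod_restrict,
    MeasureTheory.lintegral_prod _ hg.aemeasurable]

lemma triSq {c : ℝ} (hc : 0 < c) (g : ℝ × ℝ → ℝ≥0∞) (hg : Measurable g) :
    ∫⁻ p in tri c, g p
      = ∫⁻ p in (Ioo (0:ℝ) 1) ×ˢ (Ioo (0:ℝ) 1),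
          ENNReal.ofReal (c ^ 2 * p.1) * g (c * p.1, c * p.1 * p.2) := by
  rw [triSlice c g hg]
  have step1 : ∫⁻ a in Ioo 0 c, ∫⁻ b in Ioo 0 a, g (a, b)
      = ∫⁻ a in Ioo 0 c, ∫⁻ u in Ioo (0:ℝ) 1, ENNReal.ofReal a * g (a, a * u) := by
    apply setLIntegral_congr_fun measurableSet_Ioo
    intro a ha
    exact scale1 ha.1 (fun b => g (a, b))
  rw [step1, scale1 hc (fun a => ∫⁻ u in Ioo (0:ℝ) 1, ENNReal.ofReal a * g (a, a * u))]
  rw [prodSlice _ (by fun_prop)]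
  apply setLIntegral_congr_fun measurableSet_Ioo
  intro s hs
  dsimp only
  rw [← lintegral_const_mul _ (by fun_prop)]
  apply setLIntegral_congr_fun measurableSet_Ioo
  intro u hu
  dsimp only
  rw [← mul_assoc, ← ENNReal.ofReal_mul (le_of_lt hc)]
  ring_nf

/-- The part of the domain where `y₁ < x₁`. -/
def D1 : Set ((ℝ × ℝ) × (ℝ × ℝ)) := {p | p.1 ∈ refTri ∧ p.2 ∈ tri p.1.1}

lemma D1_meas : MeasurableSet D1 := by
  have : D1 = (Prod.fst ⁻¹' refTri) ∩
      ({p : (ℝ × ℝ) × (ℝ × ℝ) | 0 < p.2.2} ∩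
        ({p | p.2.2 < p.2.1} ∩ {p | p.2.1 < p.1.1})) := by
    ext p
    simp [D1, tri, and_assoc]
  rw [this]
  refine (measurable_fst (refTri_eq ▸ tri_meas 1)).inter
    (((measurableSet_lt measurable_const (measurable_snd.comp measurable_snd)).inter
      ((measurableSet_lt (measurable_snd.comp measurable_snd)
        (measurable_fst.comp measurable_snd)).inter
      (measurableSet_lt (measurable_fst.comp measurable_snd)
        (measurable_fst.comp measurable_fst)))))

lemma D1Slice (r : (ℝ × ℝ) × (ℝ × ℝ) → ℝ≥0∞) (hr : Measurable r) :
    ∫⁻ p in D1, r p = ∫⁻ x in refTri, ∫⁻ y in tri x.1, r (x, y) := by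
  rw [← lintegral_indicator D1_meas, Measure.volume_eq_prod,
    MeasureTheory.lintegral_prod _ ((hr.indicator D1_meas).aemeasurable),
    ← lintegral_indicator (refTri_eq ▸ tri_meas 1)]
  congr 1
  funext x
  by_cases hx : x ∈ refTri
  · rw [indicator_of_mem hx]
    have : ∀ y : ℝ × ℝ, D1.indicator r (x, y)
        = (tri x.1).indicator (fun y => r (x, y)) y := by
      intro y
      by_cases hy : y ∈ tri x.1
      · rw [indicator_of_mem hy, indicator_of_mem (show (x, y) ∈ D1 from ⟨hx, hy⟩)]
      · rw [indicator_of_notMem hy, indicator_of_notMem]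
        intro hxy
        exact hy hxy.2
    simp_rw [this]
    rw [lintegral_indicator (tri_meas x.1)]
  · rw [indicator_of_notMem hx]
    have : ∀ y : ℝ × ℝ, D1.indicator r (x, y) = 0 := by
      intro y
      rw [indicator_of_notMem]
      intro hxy
      exact hx hxy.1
    simp [this]

lemma keyC (r : (ℝ × ℝ) × (ℝ × ℝ) → ℝ≥0∞) (hr : Measurable r) :
    ∫⁻ p in D1, r p
      = ∫⁻ η in ((Ioo (0:ℝ) 1) ×ˢ (Ioo (0:ℝ) 1)) ×ˢ ((Ioo (0:ℝ) 1) ×ˢ (Ioo (0:ℝ) 1)),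
          ENNReal.ofReal (η.1.1 ^ 3 * η.2.1) *
            r ((η.1.1 * 1, η.1.1 * η.1.2),
               (η.1.1 * η.2.1, η.1.1 * (η.2.1 * η.2.2))) := by
  rw [D1Slice r hr]
  have step1 : ∫⁻ x in refTri, ∫⁻ y in tri x.1, r (x, y)
      = ∫⁻ x in refTri, ∫⁻ u in (Ioo (0:ℝ) 1) ×ˢ (Ioo (0:ℝ) 1),
          ENNReal.ofReal (x.1 ^ 2 * u.1) * r (x, (x.1 * u.1, x.1 * u.1 * u.2)) := by
    apply setLIntegral_congr_fun (refTri_eq ▸ tri_meas 1)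
    intro x hx
    exact triSq (hx.1.trans hx.2.1) (fun y => r (x, y)) (by fun_prop)
  rw [step1, refTri_eq,
    triSq one_pos (fun x => ∫⁻ u in (Ioo (0:ℝ) 1) ×ˢ (Ioo (0:ℝ) 1),
      ENNReal.ofReal (x.1 ^ 2 * u.1) * r (x, (x.1 * u.1, x.1 * u.1 * u.2)))
      (Measurable.lintegral_prod_right'
        (f := fun z : (ℝ × ℝ) × (ℝ × ℝ) =>
          ENNReal.ofReal (z.1.1 ^ 2 * z.2.1) * r (z.1, (z.1.1 * z.2.1, z.1.1 * z.2.1 * z.2.2)))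
        (by fun_prop)),
    prodSlice (α := ℝ × ℝ) (β := ℝ × ℝ) _ (by fun_prop)]
  apply setLIntegral_congr_fun (measurableSet_Ioo.prod measurableSet_Ioo)
  intro a ha
  dsimp only
  rw [← lintegral_const_mul _ (by fun_prop)]
  apply setLIntegral_congr_fun (measurableSet_Ioo.prod measurableSet_Ioo)
  intro u hu
  dsimp only
  simp only [one_pow, one_mul, mul_one]
  rw [← mul_assoc, ← ENNReal.ofReal_mul ha.1.1.le]
  ring_nf

def D2 : Set ((ℝ × ℝ) × (ℝ × ℝ)) := {p | p.2 ∈ refTri ∧ p.1 ∈ tri p.2.1}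

lemma D2_eq : D2 = Prod.swap ⁻¹' D1 := rfl

lemma D2_meas : MeasurableSet D2 := D2_eq ▸ D1_meas.preimage measurable_swap

lemma N_null : (volume : Measure ((ℝ × ℝ) × (ℝ × ℝ))) {p | p.1.1 = p.2.1} = 0 := by
  have hN : MeasurableSet {p : (ℝ × ℝ) × (ℝ × ℝ) | p.1.1 = p.2.1} :=
    measurableSet_eq_fun (measurable_fst.comp measurable_fst)
      (measurable_fst.comp measurable_snd)
  rw [Measure.volume_eq_prod, Measure.prod_apply hN]
  have h1 : ∀ x : ℝ × ℝ,
      (Prod.mk x ⁻¹' {p : (ℝ × ℝ) × (ℝ × ℝ) | p.1.1 = p.2.1})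
        = ({x.1} : Set ℝ) ×ˢ (univ : Set ℝ) := by
    intro x; ext y; simp [Prod.ext_iff, eq_comm]
  have hz : ∀ x : ℝ × ℝ, (volume : Measure (ℝ × ℝ)) (({x.1} : Set ℝ) ×ˢ (univ : Set ℝ)) = 0 := by
    intro x
    rw [Measure.volume_eq_prod, Measure.prod_prod]
    simp
  simp_rw [h1, hz]
  simp

lemma union_subset_prod : D1 ∪ D2 ⊆ refTri ×ˢ refTri := by
  rintro p (⟨h1, h2⟩ | ⟨h1, h2⟩)
  · exact ⟨h1, ⟨h2.1, h2.2.1, h2.2.2.trans h1.2.2⟩⟩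
  · exact ⟨⟨h2.1, h2.2.1, h2.2.2.trans h1.2.2⟩, h1⟩

lemma diff_subset_N : (refTri ×ˢ refTri) \ (D1 ∪ D2) ⊆ {p | p.1.1 = p.2.1} := by
  rintro p ⟨⟨hx, hy⟩, hn⟩
  rcases lt_trichotomy p.2.1 p.1.1 with h | h | h
  · exact absurd (Or.inl ⟨hx, hy.1, hy.2.1, h⟩) hn
  · exact h.symm
  · exact absurd (Or.inr ⟨hy, hx.1, hx.2.1, h⟩) hn

lemma ae_split : (refTri ×ˢ refTri : Set ((ℝ × ℝ) × (ℝ × ℝ))) =ᵐ[volume] ((D1 ∪ D2 : Set ((ℝ × ℝ) × (ℝ × ℝ)))) := by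
  rw [MeasureTheory.ae_eq_set]
  constructor
  · exact measure_mono_null diff_subset_N N_null
  · rw [diff_eq_empty.2 union_subset_prod]
    simp

lemma disj : Disjoint D1 D2 := by
  rw [Set.disjoint_left]
  rintro p ⟨h1, h2⟩ ⟨h3, h4⟩
  exact absurd h4.2.2 (not_lt.2 h2.2.2.le)

end SauterSchwab

/-- The Sauter–Schwab regularising transformation for a pair of elements
sharing a common vertex: writing `η = ((η₁,η₂),(η₃,η₄))`, a point of `ℝ⁴` is
read as the pair `x = (A⁽¹⁾, A⁽²⁾)`, `y = (A⁽³⁾, A⁽⁴⁾)`, with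
`A₁(η) = η₁·(1, η₂, η₃, η₃η₄)` and `A₂(η) = η₁·(η₃, η₃η₄, 1, η₂)`. -/
theorem regularisation_common_vertex
    (q : (ℝ × ℝ) × (ℝ × ℝ) → ℝ≥0∞) (hq : Measurable q) :
    ∫⁻ p in refTri ×ˢ refTri, q p
      = ∫⁻ η in ((Ioo (0:ℝ) 1) ×ˢ (Ioo (0:ℝ) 1)) ×ˢ ((Ioo (0:ℝ) 1) ×ˢ (Ioo (0:ℝ) 1)),
          ENNReal.ofReal (η.1.1 ^ 3 * η.2.1) *
            (q ((η.1.1 * 1, η.1.1 * η.1.2),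
                (η.1.1 * η.2.1, η.1.1 * (η.2.1 * η.2.2)))
              + q ((η.1.1 * η.2.1, η.1.1 * (η.2.1 * η.2.2)),
                  (η.1.1 * 1, η.1.1 * η.1.2))) := by
  have hswap : MeasurePreserving (Prod.swap : (ℝ × ℝ) × (ℝ × ℝ) → (ℝ × ℝ) × (ℝ × ℝ))
      volume volume := by
    rw [Measure.volume_eq_prod]
    exact Measure.measurePreserving_swap
  have h2 : ∫⁻ p in SauterSchwab.D2, q p = ∫⁻ p in SauterSchwab.D1, q p.swap := by
    have := hswap.setLIntegral_comp_preimage_emb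
      (MeasurableEquiv.prodComm : (ℝ × ℝ) × (ℝ × ℝ) ≃ᵐ (ℝ × ℝ) × (ℝ × ℝ)).measurableEmbedding
      (fun p => q p.swap) SauterSchwab.D1
    simpa [← SauterSchwab.D2_eq] using this
  rw [setLIntegral_congr SauterSchwab.ae_split,
    lintegral_union SauterSchwab.D2_meas SauterSchwab.disj, h2,
    SauterSchwab.keyC q hq,
    SauterSchwab.keyC (fun p => q p.swap) (hq.comp measurable_swap)]
  simp only [Prod.swap_prod_mk]
  rw [← lintegral_add_left (by fun_prop)]
  congr 1
  funext η
  ring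
end
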